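/- arXiv:2202.09702 — 4 statements merged into one kernel-verified Lean document; each statement's English description precedes it below -/
import Mathlib

section
/- Let m ≥ 2, let T be an algebraic curvature tensor on ℝ^m and let ω be an antisymmetric matrix (a 2-form). Then Σ_{a,b,c,d} (Σ_{i,j} ω_{ij} T̂_{abcdij})·(Σ_{k,t} ω_{kt} T̂_{abcdkt}) ≤ 4·(Σ_{i,j} ω_{ij}²)·(Σ_{a,b,c,d} T_{abcd}²), where T̂ is the 6-covariant tensor associated to T. -/
open Finset

namespace Paper

noncomputable section

variable {m : ℕ}

/-- Kronecker delta. -/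
def delta (i j : Fin m) : ℝ := if i = j then 1 else 0

/-- `T` is an algebraic curvature tensor: antisymmetry in the first pair, pair symmetry,
and the first Bianchi identity. -/
def IsACT (T : Fin m → Fin m → Fin m → Fin m → ℝ) : Prop :=
  (∀ i j k t, T i j k t = - T j i k t) ∧
  (∀ i j k t, T i j k t = T k t i j) ∧
  (∀ i j k t, T i j k t + T i t j k + T i k t j = 0)

/-- Ricci contraction `(E_T)_{ij} = Σ_k T_{kikj}`. -/
def ric (T : Fin m → Fin m → Fin m → Fin m → ℝ) (i j : Fin m) : ℝ := ∑ k, T k i k j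

/-- Total trace `S_T`. -/
def traceS (T : Fin m → Fin m → Fin m → Fin m → ℝ) : ℝ := ∑ i, ric T i i

def inner2 (A B : Fin m → Fin m → ℝ) : ℝ := ∑ i, ∑ j, A i j * B i j

def inner4 (A B : Fin m → Fin m → Fin m → Fin m → ℝ) : ℝ :=
  ∑ i, ∑ j, ∑ k, ∑ t, A i j k t * B i j k t

def inner6 (A B : Fin m → Fin m → Fin m → Fin m → Fin m → Fin m → ℝ) : ℝ :=
  ∑ i, ∑ j, ∑ k, ∑ t, ∑ s, ∑ r, A i j k t s r * B i j k t s r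

/-- Lichnerowicz operator `Γ` associated to `R`, acting on 2-covariant tensors. -/
def gamma2 (R : Fin m → Fin m → Fin m → Fin m → ℝ) (Q : Fin m → Fin m → ℝ)
    (i j : Fin m) : ℝ :=
  (∑ s, ric R i s * Q s j) + (∑ s, ric R j s * Q i s)
    - ∑ s, ∑ t, (R i s j t * Q s t + R j s i t * Q t s)

/-- Lichnerowicz operator `Γ` associated to `R`, acting on 4-covariant tensors. -/
def gamma4 (R Q : Fin m → Fin m → Fin m → Fin m → ℝ) (i j k w : Fin m) : ℝ :=
  (∑ s, ric R i s * Q s j k w) + (∑ s, ric R j s * Q i s k w) +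
  (∑ s, ric R k s * Q i j s w) + (∑ s, ric R w s * Q i j k s)
  - ∑ s, ∑ t,
      (R i s j t * Q s t k w + R i s k t * Q s j t w + R i s w t * Q s j k t +
       R j s i t * Q t s k w + R j s k t * Q i s t w + R j s w t * Q i s k t +
       R k s i t * Q t j s w + R k s j t * Q i t s w + R k s w t * Q i j s t +
       R w s i t * Q t j k s + R w s j t * Q i t k s + R w s k t * Q i j t s)

/-- Kulkarni–Nomizu product of symmetric matrices. -/
def kn (A B : Fin m → Fin m → ℝ) (i j k t : Fin m) : ℝ :=
  A i k * B j t + A j t * B i k - A i t * B j k - A j k * B i t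

/-- Traceless part of a matrix. -/
def Zmat (E : Fin m → Fin m → ℝ) (i j : Fin m) : ℝ :=
  E i j - ((∑ k, E k k) / (m : ℝ)) * delta i j

/-- Traceless part `Z_T` of the Ricci contraction of `T`. -/
def Zpart (T : Fin m → Fin m → Fin m → Fin m → ℝ) (i j : Fin m) : ℝ :=
  ric T i j - (traceS T / (m : ℝ)) * delta i j

/-- Schouten-type tensor `A_T`. -/
def Apart (T : Fin m → Fin m → Fin m → Fin m → ℝ) (i j : Fin m) : ℝ :=
  ric T i j - (traceS T / (2 * ((m : ℝ) - 1))) * delta i j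

/-- Weyl part `W_T = T - (1/(m-2)) A_T ⊙ δ`. -/
def Wpart (T : Fin m → Fin m → Fin m → Fin m → ℝ) (i j k t : Fin m) : ℝ :=
  T i j k t - (1 / ((m : ℝ) - 2)) * kn (Apart T) delta i j k t

/-- Pseudo-projective tensor `P_T`. -/
def pproj (T : Fin m → Fin m → Fin m → Fin m → ℝ) (i j k t : Fin m) : ℝ :=
  T i j k t - (1 / ((m : ℝ) - 1)) * (delta i k * ric T j t - delta i t * ric T j k)

/-- The 6-covariant tensor `T̂` associated to a 4-covariant tensor `T`. -/
def hat4 (T : Fin m → Fin m → Fin m → Fin m → ℝ) (i j k t s r : Fin m) : ℝ :=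
  (1 / 2) * (T s j k t * delta i r + T i s k t * delta j r + T i j s t * delta k r +
             T i j k s * delta t r - T r j k t * delta i s - T i r k t * delta j s -
             T i j r t * delta k s - T i j k r * delta t s)

/-- Sectional curvature of the plane spanned by `X, Y`. -/
def sect (R : Fin m → Fin m → Fin m → Fin m → ℝ) (X Y : Fin m → ℝ) : ℝ :=
  (∑ i, ∑ j, ∑ k, ∑ t, R i j k t * X i * Y j * X k * Y t) /
    ((∑ i, X i * X i) * (∑ i, Y i * Y i) - (∑ i, X i * Y i) ^ 2)

/-- Decomposable 2-form associated to the pair `(X, Y)`. -/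
def dform (X Y : Fin m → ℝ) (i j : Fin m) : ℝ := (X i * Y j - X j * Y i) / 2

/-- A full spectral decomposition of the curvature operator `𝔯` on `Λ²` induced by `R`:
`ω` is an orthonormal family of antisymmetric eigen-2-forms (of cardinality `dim Λ² = m(m-1)/2`,
hence an orthonormal eigenbasis) with nondecreasing eigenvalues `lam`. -/
def SpectralData (R : Fin m → Fin m → Fin m → Fin m → ℝ)
    (lam : Fin (m * (m - 1) / 2) → ℝ) (ω : Fin (m * (m - 1) / 2) → Fin m → Fin m → ℝ) :
    Prop :=
  (∀ α i j, ω α i j = - ω α j i) ∧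
  (∀ α β, inner2 (ω α) (ω β) = if α = β then 1 else 0) ∧
  (∀ α k t, (∑ i, ∑ j, R i j k t * ω α i j) = lam α * ω α k t) ∧
  Monotone lam

/-- `𝔯^(k)`: the average of the `k` smallest eigenvalues. -/
def partialAvg {N : ℕ} (lam : Fin N → ℝ) (k : ℕ) : ℝ :=
  (∑ α ∈ Finset.univ.filter (fun α : Fin N => (α : ℕ) < k), lam α) / (k : ℝ)


/-! ### Auxiliary lemmas for Statement 9 -/

section Statement9Aux

open Matrix Complex

variable {n : Type*} [Fintype n] [DecidableEq n]

def froC (A : Matrix n n ℂ) : ℝ := ∑ a, ∑ b, Complex.normSq (A a b)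

lemma fiber_card_le (θ : n → ℝ) (U : Matrix n n ℂ)
    (hrow : ∀ a, ∑ b, Complex.normSq (U a b) = 1)
    (hcol : ∀ b, ∑ a, Complex.normSq (U a b) = 1)
    (hsupp : ∀ a b, θ a + θ b ≠ 0 → U a b = 0) (t : ℝ) :
    (filter (fun a => θ a = t) univ).card ≤ (filter (fun a => θ a = -t) univ).card := by
  have key : ((filter (fun a => θ a = t) univ).card : ℝ)
      ≤ ((filter (fun a => θ a = -t) univ).card : ℝ) := by
    calc ((filter (fun a => θ a = t) univ).card : ℝ)
        = ∑ a ∈ filter (fun a => θ a = t) univ, (1:ℝ) := by simp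
      _ = ∑ a ∈ filter (fun a => θ a = t) univ, ∑ b, Complex.normSq (U a b) := by
          exact Finset.sum_congr rfl (fun a _ => (hrow a).symm)
      _ = ∑ a ∈ filter (fun a => θ a = t) univ,
            ∑ b ∈ filter (fun b => θ b = -t) univ, Complex.normSq (U a b) := by
          refine Finset.sum_congr rfl (fun a ha => ?_)
          rw [Finset.mem_filter] at ha
          refine (Finset.sum_subset (Finset.filter_subset _ _) (fun b _ hb => ?_)).symm
          rw [Finset.mem_filter] at hb
          have : θ a + θ b ≠ 0 := by
            intro h
            exact hb ⟨Finset.mem_univ b, by linarith [ha.2]⟩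
          rw [hsupp a b this]; simp
      _ = ∑ b ∈ filter (fun b => θ b = -t) univ,
            ∑ a ∈ filter (fun a => θ a = t) univ, Complex.normSq (U a b) := Finset.sum_comm
      _ ≤ ∑ b ∈ filter (fun b => θ b = -t) univ, ∑ a, Complex.normSq (U a b) := by
          refine Finset.sum_le_sum (fun b _ => ?_)
          refine Finset.sum_le_sum_of_subset_of_nonneg (Finset.filter_subset _ _)
            (fun a _ _ => Complex.normSq_nonneg _)
      _ = ∑ b ∈ filter (fun b => θ b = -t) univ, (1:ℝ) :=
          Finset.sum_congr rfl (fun b _ => hcol b)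
      _ = ((filter (fun a => θ a = -t) univ).card : ℝ) := by simp
  exact_mod_cast key


lemma sum_sq_fibers (θ : n → ℝ) (Vs : Finset ℝ) :
    ∑ v ∈ Vs, ((filter (fun a => θ a = v) univ).card : ℝ) * v^2 ≤ ∑ c, (θ c)^2 := by
  have h1 : ∀ v ∈ Vs, ((filter (fun a => θ a = v) univ).card : ℝ) * v^2
      = ∑ a ∈ filter (fun a => θ a = v) univ, (θ a)^2 := by
    intro v _
    have : ∑ a ∈ filter (fun a => θ a = v) univ, (θ a)^2
        = ∑ _a ∈ filter (fun a => θ a = v) univ, v^2 := by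
      refine Finset.sum_congr rfl (fun a ha => ?_)
      rw [Finset.mem_filter] at ha; rw [ha.2]
    rw [this, Finset.sum_const, nsmul_eq_mul]
  rw [Finset.sum_congr rfl h1]
  rw [← Finset.sum_biUnion ?hd]
  · exact Finset.sum_le_sum_of_subset_of_nonneg (Finset.subset_univ _)
      (fun a _ _ => sq_nonneg _)
  case hd =>
    intro v _ w _ hvw
    refine Finset.disjoint_left.2 (fun a ha hb => ?_)
    rw [Finset.mem_filter] at ha hb
    exact hvw (by rw [← ha.2, ← hb.2])

lemma pair_sq_le (θ : n → ℝ)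
    (hcnt : ∀ t : ℝ, (filter (fun a => θ a = t) univ).card
      = (filter (fun a => θ a = -t) univ).card)
    {a b : n} (hab : a ≠ b) : (θ a + θ b)^2 ≤ ∑ c, (θ c)^2 := by
  set p := θ a with hp
  set q := θ b with hq
  by_cases hpq : p + q = 0
  · rw [hpq]
    simpa using Finset.sum_nonneg (fun c _ => sq_nonneg (θ c))
  have cnt_nonneg : ∀ v : ℝ, (0:ℝ) ≤ ((filter (fun c => θ c = v) univ).card : ℝ) := by
    intro v; positivity
  have hpa : a ∈ filter (fun c => θ c = p) univ := by simp [hp]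
  have hqb : b ∈ filter (fun c => θ c = q) univ := by simp [hq]
  have cnt1 : ∀ (v : ℝ) (c : n), θ c = v → (1:ℝ) ≤ ((filter (fun x => θ x = v) univ).card : ℝ) := by
    intro v c hc
    have : 0 < (filter (fun x => θ x = v) univ).card :=
      Finset.card_pos.2 ⟨c, by simp [hc]⟩
    exact_mod_cast this
  by_cases hq0 : q = p
  · -- p = q, p ≠ 0
    have hp0 : p ≠ 0 := fun h => hpq (by rw [hq0, h]; ring)
    have hne : p ≠ -p := fun h => hp0 (by linarith)
    have h2 : (2:ℝ) ≤ ((filter (fun c => θ c = p) univ).card : ℝ) := by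
      have : ({a, b} : Finset n) ⊆ filter (fun c => θ c = p) univ := by
        intro c hc
        rcases Finset.mem_insert.1 hc with h | h
        · exact h ▸ hpa
        · rw [Finset.mem_singleton] at h
          subst h
          simp only [Finset.mem_filter, Finset.mem_univ, true_and]
          exact hq.symm.trans hq0
      have := Finset.card_le_card this
      rw [Finset.card_pair hab] at this
      exact_mod_cast this
    have key := sum_sq_fibers θ ({p, -p} : Finset ℝ)
    rw [Finset.sum_insert (by simpa using hne), Finset.sum_singleton] at key
    have hc2 : (2:ℝ) ≤ ((filter (fun c => θ c = -p) univ).card : ℝ) := by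
      rw [← hcnt p]; exact h2
    have e1 : 2 * p^2 ≤ ((filter (fun a => θ a = p) univ).card : ℝ) * p^2 :=
      mul_le_mul_of_nonneg_right h2 (sq_nonneg p)
    have e2 : 2 * (-p)^2 ≤ ((filter (fun a => θ a = -p) univ).card : ℝ) * (-p)^2 :=
      mul_le_mul_of_nonneg_right hc2 (sq_nonneg (-p))
    have hgoal : (p + q)^2 = 4 * p^2 := by rw [hq0]; ring
    have hneg : (-p)^2 = p^2 := by ring
    rw [hgoal]; rw [hneg] at e2; linarith
  · -- q ≠ p
    by_cases hp0 : p = 0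
    · have hq0' : q ≠ 0 := fun h => hpq (by rw [hp0, h]; ring)
      have hne : q ≠ -q := fun h => hq0' (by linarith)
      have key := sum_sq_fibers θ ({q, -q} : Finset ℝ)
      rw [Finset.sum_insert (by simpa using hne), Finset.sum_singleton] at key
      have h1 : (1:ℝ) ≤ ((filter (fun c => θ c = q) univ).card : ℝ) := cnt1 q b hq.symm
      have h1' : (1:ℝ) ≤ ((filter (fun c => θ c = -q) univ).card : ℝ) := by
        rw [← hcnt q]; exact h1
      have e1 : 1 * q^2 ≤ ((filter (fun a => θ a = q) univ).card : ℝ) * q^2 :=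
        mul_le_mul_of_nonneg_right h1 (sq_nonneg q)
      have e2 : 1 * (-q)^2 ≤ ((filter (fun a => θ a = -q) univ).card : ℝ) * (-q)^2 :=
        mul_le_mul_of_nonneg_right h1' (sq_nonneg (-q))
      have hgoal : (p + q)^2 = q^2 := by rw [hp0]; ring
      have hneg : (-q)^2 = q^2 := by ring
      rw [hgoal]; rw [hneg] at e2; linarith [sq_nonneg q]
    · by_cases hqz : q = 0
      · have hne : p ≠ -p := fun h => hp0 (by linarith)
        have key := sum_sq_fibers θ ({p, -p} : Finset ℝ)
        rw [Finset.sum_insert (by simpa using hne), Finset.sum_singleton] at key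
        have h1 : (1:ℝ) ≤ ((filter (fun c => θ c = p) univ).card : ℝ) := cnt1 p a hp.symm
        have h1' : (1:ℝ) ≤ ((filter (fun c => θ c = -p) univ).card : ℝ) := by
          rw [← hcnt p]; exact h1
        have e1 : 1 * p^2 ≤ ((filter (fun a => θ a = p) univ).card : ℝ) * p^2 :=
          mul_le_mul_of_nonneg_right h1 (sq_nonneg p)
        have e2 : 1 * (-p)^2 ≤ ((filter (fun a => θ a = -p) univ).card : ℝ) * (-p)^2 :=
          mul_le_mul_of_nonneg_right h1' (sq_nonneg (-p))
        have hgoal : (p + q)^2 = p^2 := by rw [hqz]; ring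
        have hneg : (-p)^2 = p^2 := by ring
        rw [hgoal]; rw [hneg] at e2; linarith [sq_nonneg p]
      · -- p, q, -p, -q pairwise distinct
        have h1 : p ∉ ({-p, q, -q} : Finset ℝ) := by
          simp only [Finset.mem_insert, Finset.mem_singleton]
          push_neg
          refine ⟨fun h => hp0 (by linarith), fun h => hq0 h.symm, fun h => hpq (by linarith)⟩
        have h2 : (-p) ∉ ({q, -q} : Finset ℝ) := by
          simp only [Finset.mem_insert, Finset.mem_singleton]
          push_neg
          constructor
          · intro h; exact hpq (by linarith)
          · intro h; exact hq0 (by linarith)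
        have h3 : q ∉ ({-q} : Finset ℝ) := by
          simp only [Finset.mem_singleton]
          intro h; exact hqz (by linarith)
        have key := sum_sq_fibers θ ({p, -p, q, -q} : Finset ℝ)
        rw [Finset.sum_insert h1, Finset.sum_insert h2, Finset.sum_insert h3,
          Finset.sum_singleton] at key
        have k1 : (1:ℝ) ≤ ((filter (fun c => θ c = p) univ).card : ℝ) := cnt1 p a hp.symm
        have k2 : (1:ℝ) ≤ ((filter (fun c => θ c = q) univ).card : ℝ) := cnt1 q b hq.symm
        have k3 : (1:ℝ) ≤ ((filter (fun c => θ c = -p) univ).card : ℝ) := by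
          rw [← hcnt p]; exact k1
        have k4 : (1:ℝ) ≤ ((filter (fun c => θ c = -q) univ).card : ℝ) := by
          rw [← hcnt q]; exact k2
        have e1 : 1 * p^2 ≤ ((filter (fun a => θ a = p) univ).card : ℝ) * p^2 :=
          mul_le_mul_of_nonneg_right k1 (sq_nonneg p)
        have e2 : 1 * (-p)^2 ≤ ((filter (fun a => θ a = -p) univ).card : ℝ) * (-p)^2 :=
          mul_le_mul_of_nonneg_right k3 (sq_nonneg (-p))
        have e3 : 1 * q^2 ≤ ((filter (fun a => θ a = q) univ).card : ℝ) * q^2 :=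
          mul_le_mul_of_nonneg_right k2 (sq_nonneg q)
        have e4 : 1 * (-q)^2 ≤ ((filter (fun a => θ a = -q) univ).card : ℝ) * (-q)^2 :=
          mul_le_mul_of_nonneg_right k4 (sq_nonneg (-q))
        nlinarith [sq_nonneg (p - q), e1, e2, e3, e4, key]


variable {n : Type*} [Fintype n] [DecidableEq n]

omit [DecidableEq n] in
lemma froC_eq_trace (A : Matrix n n ℂ) : (froC A : ℂ) = Matrix.trace (A * Aᴴ) := by
  rw [Matrix.trace]
  push_cast [froC]
  rw [Finset.sum_congr rfl (fun a _ => ?_)]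
  rw [Matrix.diag, Matrix.mul_apply]
  rw [Finset.sum_congr rfl (fun b _ => ?_)]
  rw [Matrix.conjTranspose_apply, ← Complex.mul_conj]
  rfl

lemma froC_conj (U A V : Matrix n n ℂ) (hU : Uᴴ * U = 1) (hV : V * Vᴴ = 1) :
    froC (U * A * V) = froC A := by
  have h : ((froC (U * A * V) : ℂ)) = (froC A : ℂ) := by
    rw [froC_eq_trace, froC_eq_trace]
    have : (U * A * V) * (U * A * V)ᴴ = U * (A * Aᴴ) * Uᴴ := by
      simp only [Matrix.conjTranspose_mul]
      calc U * A * V * (Vᴴ * (Aᴴ * Uᴴ)) = U * A * (V * Vᴴ) * (Aᴴ * Uᴴ) := by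
            simp only [Matrix.mul_assoc]
          _ = U * (A * Aᴴ) * Uᴴ := by rw [hV]; simp only [Matrix.mul_one, Matrix.mul_assoc]
    rw [this, Matrix.trace_mul_cycle, ← Matrix.mul_assoc, hU, Matrix.one_mul]
  exact_mod_cast h

lemma key_comm (S W : Matrix n n ℝ) (hS : Sᵀ = -S) (hW : Wᵀ = -W) :
    ∑ a, ∑ b, ((S*W - W*S) a b)^2 ≤ (∑ a, ∑ b, (S a b)^2) * (∑ a, ∑ b, (W a b)^2) := by
  classical
  set Sc : Matrix n n ℂ := S.map Complex.ofReal with hScdef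
  set Wc : Matrix n n ℂ := W.map Complex.ofReal with hWcdef
  have hWcT : Wcᵀ = -Wc := by
    ext a b
    have := congrFun (congrFun hW a) b
    simp only [Matrix.transpose_apply, Matrix.neg_apply] at this ⊢
    simp [hWcdef, Matrix.map_apply, this]
  have hScT : Scᵀ = -Sc := by
    ext a b
    have := congrFun (congrFun hS a) b
    simp only [Matrix.transpose_apply, Matrix.neg_apply] at this ⊢
    simp [hScdef, Matrix.map_apply, this]
  -- Hermitian matrix
  have hH : (Complex.I • Wc).IsHermitian := by
    rw [Matrix.IsHermitian]
    ext a b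
    have hWba : W b a = -W a b := by
      have h := congrFun (congrFun hW a) b
      simp only [Matrix.transpose_apply, Matrix.neg_apply] at h
      linarith
    simp only [Matrix.conjTranspose_apply, Matrix.smul_apply, Matrix.map_apply, smul_eq_mul,
      star_mul', Complex.star_def, Complex.conj_I, Complex.conj_ofReal, hWcdef, hWba]
    push_cast
    ring
  set θ : n → ℝ := hH.eigenvalues with hθdef
  set V : Matrix n n ℂ := (hH.eigenvectorUnitary : Matrix n n ℂ) with hVdef
  have hV1 : Vᴴ * V = 1 := by
    have := hH.eigenvectorUnitary.2
    rw [Matrix.mem_unitaryGroup_iff'] at this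
    exact this
  have hV2 : V * Vᴴ = 1 := by
    have := hH.eigenvectorUnitary.2
    rw [Matrix.mem_unitaryGroup_iff] at this
    exact this
  set D : Matrix n n ℂ := diagonal (fun a => -(Complex.I * (θ a : ℂ))) with hDdef
  have hspec : Complex.I • Wc = V * diagonal (fun a => ((θ a : ℝ) : ℂ)) * Vᴴ := by
    have := hH.spectral_theorem
    rw [Unitary.conjStarAlgAut_apply] at this
    exact this
  have hWcD : Wc = V * D * Vᴴ := by
    have h1 : Wc = (-Complex.I) • (Complex.I • Wc) := by
      rw [smul_smul]
      norm_num [Complex.I_mul_I]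
    rw [h1, hspec, ← Matrix.smul_mul, ← Matrix.mul_smul]
    congr 1
    congr 1
    ext a b
    by_cases h : a = b
    · subst h
      rw [hDdef]
      simp only [Matrix.smul_apply, Matrix.diagonal_apply_eq, smul_eq_mul]
      ring
    · rw [hDdef]
      simp [Matrix.diagonal_apply_ne _ h, h]
  have hWV : Wc * V = V * D := by
    rw [hWcD, Matrix.mul_assoc, Matrix.mul_assoc, hV1, Matrix.mul_one]
  have hVHW : Vᴴ * Wc = D * Vᴴ := by
    rw [hWcD, ← Matrix.mul_assoc, ← Matrix.mul_assoc, hV1, Matrix.one_mul]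
  have hVtW : Vᵀ * Wc = -(D * Vᵀ) := by
    have := congrArg Matrix.transpose hWV
    rw [Matrix.transpose_mul, Matrix.transpose_mul, hWcT, Matrix.diagonal_transpose] at this
    rw [Matrix.mul_neg] at this
    rw [← hDdef] at this
    rw [← this, neg_neg]
  -- conjugate matrix machinery
  set CJ : Matrix n n ℂ → Matrix n n ℂ := fun A => A.map (starRingEnd ℂ) with hCJdef
  have hCJmul : ∀ A B : Matrix n n ℂ, CJ (A * B) = CJ A * CJ B := by
    intro A B
    exact Matrix.map_mul
  set Vb : Matrix n n ℂ := CJ V with hVbdef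
  have hCJH : CJ Vᴴ = Vᵀ := by
    ext a b
    simp [hCJdef, Matrix.map_apply, Matrix.conjTranspose_apply, Matrix.transpose_apply]
  have hVbH : Vbᴴ = Vᵀ := by
    ext a b
    simp [hVbdef, hCJdef, Matrix.map_apply, Matrix.conjTranspose_apply, Matrix.transpose_apply]
  have hCJone : CJ 1 = 1 := by
    ext a b
    by_cases h : a = b
    · subst h; simp [hCJdef, Matrix.map_apply]
    · simp [hCJdef, Matrix.map_apply, Matrix.one_apply_ne h]
  have hVbVt : Vb * Vᵀ = 1 := by
    have := congrArg CJ hV2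
    rw [hCJmul, hCJH, hCJone] at this
    exact this
  have hVtVb : Vᵀ * Vb = 1 := by
    have := congrArg CJ hV1
    rw [hCJmul, hCJH, hCJone] at this
    exact this
  have hCJWc : CJ Wc = Wc := by
    ext a b
    simp [hCJdef, hWcdef, Matrix.map_apply, Complex.conj_ofReal]
  have hCJD : CJ D = -D := by
    ext a b
    by_cases h : a = b
    · subst h
      simp [hCJdef, hDdef, Matrix.map_apply, Matrix.diagonal_apply_eq, Complex.conj_ofReal]
    · simp [hCJdef, hDdef, Matrix.map_apply, Matrix.diagonal_apply_ne _ h]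
  have hWVb : Wc * Vb = -(Vb * D) := by
    have := congrArg CJ hWV
    rw [hCJmul, hCJmul, hCJWc, hCJD] at this
    rw [Matrix.mul_neg] at this
    exact this
  -- M and N
  set M : Matrix n n ℂ := Vᵀ * Sc * V with hMdef
  have hMT : Mᵀ = -M := by
    rw [hMdef, Matrix.transpose_mul, Matrix.transpose_mul, Matrix.transpose_transpose, hScT]
    simp only [Matrix.neg_mul, Matrix.mul_neg, Matrix.mul_assoc]
  have hMdiag : ∀ a, M a a = 0 := by
    intro a
    have h := congrFun (congrFun hMT a) a
    simp only [Matrix.transpose_apply, Matrix.neg_apply] at h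
    have h2 : (2:ℂ) * M a a = 0 := by linear_combination h
    rcases mul_eq_zero.1 h2 with h3 | h3
    · exact absurd h3 two_ne_zero
    · exact h3
  set Cc : Matrix n n ℂ := Sc * Wc - Wc * Sc with hCcdef
  have hN : Vᵀ * Cc * V = M * D + D * M := by
    rw [hCcdef]
    rw [Matrix.mul_sub, Matrix.sub_mul]
    have e1 : Vᵀ * (Sc * Wc) * V = M * D := by
      calc Vᵀ * (Sc * Wc) * V = Vᵀ * (Sc * (Wc * V)) := by simp only [Matrix.mul_assoc]
        _ = Vᵀ * (Sc * (V * D)) := by rw [hWV]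
        _ = M * D := by rw [hMdef]; simp only [Matrix.mul_assoc]
    have e2 : Vᵀ * (Wc * Sc) * V = -(D * M) := by
      calc Vᵀ * (Wc * Sc) * V = (Vᵀ * Wc) * (Sc * V) := by simp only [Matrix.mul_assoc]
        _ = (-(D * Vᵀ)) * (Sc * V) := by rw [hVtW]
        _ = -(D * M) := by
            rw [Matrix.neg_mul, hMdef]
            simp only [Matrix.mul_assoc]
    rw [e1, e2, sub_neg_eq_add]
  -- U and eigenvalue pairing
  set U : Matrix n n ℂ := Vᴴ * Vb with hUdef
  have hUH : Uᴴ = Vᵀ * V := by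
    rw [hUdef, Matrix.conjTranspose_mul, hVbH, Matrix.conjTranspose_conjTranspose]
  have hU1 : U * Uᴴ = 1 := by
    rw [hUH, hUdef]
    calc Vᴴ * Vb * (Vᵀ * V) = Vᴴ * (Vb * Vᵀ) * V := by simp only [Matrix.mul_assoc]
      _ = 1 := by rw [hVbVt, Matrix.mul_one, hV1]
  have hU2 : Uᴴ * U = 1 := by
    rw [hUH, hUdef]
    calc Vᵀ * V * (Vᴴ * Vb) = Vᵀ * (V * Vᴴ) * Vb := by simp only [Matrix.mul_assoc]
      _ = 1 := by rw [hV2, Matrix.mul_one, hVtVb]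
  have hDU : D * U = -(U * D) := by
    rw [hUdef]
    calc D * (Vᴴ * Vb) = (D * Vᴴ) * Vb := by rw [Matrix.mul_assoc]
      _ = (Vᴴ * Wc) * Vb := by rw [hVHW]
      _ = Vᴴ * (Wc * Vb) := by rw [Matrix.mul_assoc]
      _ = Vᴴ * (-(Vb * D)) := by rw [hWVb]
      _ = -(Vᴴ * Vb * D) := by rw [Matrix.mul_neg, Matrix.mul_assoc]
  have hsupp : ∀ a b, θ a + θ b ≠ 0 → U a b = 0 := by
    intro a b hab
    have h := congrFun (congrFun hDU a) b
    rw [hDdef] at h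
    rw [Matrix.neg_apply, Matrix.diagonal_mul, Matrix.mul_diagonal] at h
    have h2 : Complex.I * (((θ a : ℂ) + (θ b : ℂ)) * U a b) = 0 := by
      linear_combination -h
    have h3 : ((θ a : ℂ) + (θ b : ℂ)) * U a b = 0 := by
      rcases mul_eq_zero.1 h2 with h3 | h3
      · exact absurd h3 Complex.I_ne_zero
      · exact h3
    rcases mul_eq_zero.1 h3 with h4 | h4
    · exfalso
      apply hab
      exact_mod_cast (by push_cast; exact h4 : ((θ a + θ b : ℝ) : ℂ) = 0)
    · exact h4
  have hrow : ∀ a, ∑ b, Complex.normSq (U a b) = 1 := by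
    intro a
    have h := congrFun (congrFun hU1 a) a
    rw [Matrix.mul_apply, Matrix.one_apply_eq] at h
    have h2 : ∑ b, ((Complex.normSq (U a b) : ℂ)) = 1 := by
      rw [← h]
      refine Finset.sum_congr rfl (fun b _ => ?_)
      rw [Matrix.conjTranspose_apply, ← Complex.mul_conj]
      rfl
    have h3 : ((∑ b, Complex.normSq (U a b) : ℝ) : ℂ) = 1 := by push_cast; exact h2
    exact_mod_cast h3
  have hcol : ∀ b, ∑ a, Complex.normSq (U a b) = 1 := by
    intro b
    have h := congrFun (congrFun hU2 b) b
    rw [Matrix.mul_apply, Matrix.one_apply_eq] at h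
    have h2 : ∑ a, ((Complex.normSq (U a b) : ℂ)) = 1 := by
      rw [← h]
      refine Finset.sum_congr rfl (fun a _ => ?_)
      rw [Matrix.conjTranspose_apply, mul_comm, ← Complex.mul_conj]
      rfl
    have h3 : ((∑ a, Complex.normSq (U a b) : ℝ) : ℂ) = 1 := by push_cast; exact h2
    exact_mod_cast h3
  have hcnt : ∀ t : ℝ, (filter (fun a => θ a = t) univ).card
      = (filter (fun a => θ a = -t) univ).card := by
    intro t
    refine Nat.le_antisymm (fiber_card_le θ U hrow hcol hsupp t) ?_
    have := fiber_card_le θ U hrow hcol hsupp (-t)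
    simpa [neg_neg] using this
  have hpair : ∀ a b : n, a ≠ b → (θ a + θ b)^2 ≤ ∑ c, (θ c)^2 := fun a b hab => pair_sq_le θ hcnt hab
  -- Frobenius norm computations
  have hfroR : ∀ X : Matrix n n ℝ, froC (X.map Complex.ofReal) = ∑ a, ∑ b, (X a b)^2 := by
    intro X
    unfold froC
    refine Finset.sum_congr rfl (fun a _ => Finset.sum_congr rfl (fun b _ => ?_))
    rw [Matrix.map_apply, Complex.normSq_ofReal, sq]
  have hmapC : (S * W - W * S).map Complex.ofReal = Cc := by
    rw [hCcdef, hScdef, hWcdef]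
    ext a b
    simp [Matrix.map_apply, Matrix.sub_apply, Matrix.mul_apply]
  have hVtH : (Vᵀ)ᴴ * Vᵀ = 1 := by
    have : (Vᵀ)ᴴ = Vb := by rw [← hVbH, Matrix.conjTranspose_conjTranspose]
    rw [this, hVbVt]
  have froCc : froC Cc = froC (Vᵀ * Cc * V) := (froC_conj Vᵀ Cc V hVtH hV2).symm
  have froM : froC M = froC Sc := froC_conj Vᵀ Sc V hVtH hV2
  have froWc : froC Wc = froC D := by
    rw [hWcD]
    exact froC_conj V D Vᴴ hV1 (by rw [Matrix.conjTranspose_conjTranspose, hV1])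
  have froD : froC D = ∑ c, (θ c)^2 := by
    unfold froC
    refine Finset.sum_congr rfl (fun a _ => ?_)
    have hterm : ∀ b, Complex.normSq (D a b) = if b = a then (θ a)^2 else 0 := by
      intro b
      by_cases h : b = a
      · subst h
        rw [hDdef]
        simp [Matrix.diagonal_apply_eq, Complex.normSq_mul, Complex.normSq_ofReal, sq]
      · rw [hDdef, if_neg h]
        simp [Matrix.diagonal_apply_ne _ (Ne.symm h)]
    rw [Finset.sum_congr rfl (fun b _ => hterm b), Finset.sum_ite_eq' univ a
      (fun _ => (θ a)^2), if_pos (Finset.mem_univ a)]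
  -- entrywise computation of froC (M*D + D*M)
  have froN : froC (M * D + D * M) = ∑ a, ∑ b, (θ a + θ b)^2 * Complex.normSq (M a b) := by
    unfold froC
    refine Finset.sum_congr rfl (fun a _ => Finset.sum_congr rfl (fun b _ => ?_))
    have he : (M * D + D * M) a b = -(Complex.I * ((θ a + θ b : ℝ) : ℂ) * M a b) := by
      rw [Matrix.add_apply, hDdef, Matrix.mul_diagonal, Matrix.diagonal_mul]
      push_cast
      ring
    rw [he]
    rw [Complex.normSq_neg, Complex.normSq_mul, Complex.normSq_mul, Complex.normSq_I,
      Complex.normSq_ofReal]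
    ring
  -- final chain
  have main : ∑ a, ∑ b, ((S*W - W*S) a b)^2 ≤ (∑ c, (θ c)^2) * (∑ a, ∑ b, (S a b)^2) := by
    rw [← hfroR (S*W - W*S), hmapC, froCc, hN, froN]
    calc ∑ a, ∑ b, (θ a + θ b)^2 * Complex.normSq (M a b)
        ≤ ∑ a, ∑ b, (∑ c, (θ c)^2) * Complex.normSq (M a b) := by
          refine Finset.sum_le_sum (fun a _ => Finset.sum_le_sum (fun b _ => ?_))
          by_cases hab : a = b
          · subst hab
            rw [hMdiag a]
            simp
          · exact mul_le_mul_of_nonneg_right (hpair a b hab) (Complex.normSq_nonneg _)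
      _ = (∑ c, (θ c)^2) * (∑ a, ∑ b, Complex.normSq (M a b)) := by
          rw [Finset.mul_sum]
          exact Finset.sum_congr rfl (fun a _ => (Finset.mul_sum _ _ _).symm)
      _ = (∑ c, (θ c)^2) * froC M := rfl
      _ = (∑ c, (θ c)^2) * froC Sc := by rw [froM]
      _ = (∑ c, (θ c)^2) * (∑ a, ∑ b, (S a b)^2) := by rw [hScdef, hfroR]
  have hWnorm : ∑ c, (θ c)^2 = ∑ a, ∑ b, (W a b)^2 := by
    rw [← froD, ← froWc, hWcdef, hfroR]
  rw [hWnorm] at main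
  calc ∑ a, ∑ b, ((S*W - W*S) a b)^2 ≤ (∑ a, ∑ b, (W a b)^2) * (∑ a, ∑ b, (S a b)^2) := main
    _ = (∑ a, ∑ b, (S a b)^2) * (∑ a, ∑ b, (W a b)^2) := mul_comm _ _


/-- Four-fold sum: swapping the two pairs of indices. -/
lemma aux9_swap4 {m : ℕ} (f : Fin m → Fin m → Fin m → Fin m → ℝ) :
    ∑ a, ∑ b, ∑ c, ∑ d, f c d a b = ∑ a, ∑ b, ∑ c, ∑ d, f a b c d := by
  have e1 : ∑ p : Fin m × Fin m, ∑ q : Fin m × Fin m, f q.1 q.2 p.1 p.2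
      = ∑ a, ∑ b, ∑ c, ∑ d, f c d a b := by
    rw [Fintype.sum_prod_type]
    exact Finset.sum_congr rfl (fun a _ => Finset.sum_congr rfl (fun b _ => by
      rw [Fintype.sum_prod_type]))
  have e2 : ∑ q : Fin m × Fin m, ∑ p : Fin m × Fin m, f q.1 q.2 p.1 p.2
      = ∑ a, ∑ b, ∑ c, ∑ d, f a b c d := by
    rw [Fintype.sum_prod_type]
    exact Finset.sum_congr rfl (fun a _ => Finset.sum_congr rfl (fun b _ => by
      rw [Fintype.sum_prod_type]))
  rw [← e1, ← e2]
  exact Finset.sum_comm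

lemma aux9_hatF {m : ℕ} (T : Fin m → Fin m → Fin m → Fin m → ℝ) (ω : Fin m → Fin m → ℝ)
    (hω : ∀ i j, ω i j = - ω j i) (a b c d : Fin m) :
    ∑ i, ∑ j, ω i j * hat4 T a b c d i j
      = ∑ s, (ω s a * T s b c d + ω s b * T a s c d + ω s c * T a b s d + ω s d * T a b c s) := by
  simp only [hat4, delta, mul_ite, mul_one, mul_zero, ite_mul, zero_mul, one_mul,
    mul_sub, mul_add, Finset.sum_add_distrib, Finset.sum_sub_distrib,
    Finset.sum_ite_irrel, Finset.sum_const_zero,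
    Finset.sum_ite_eq, Finset.sum_ite_eq', Finset.mem_univ, ite_true]
  have e1 : ∑ y, ω a y * (1/2 * T y b c d) = -∑ x, ω x a * (1/2 * T x b c d) := by
    rw [← Finset.sum_neg_distrib]
    exact Finset.sum_congr rfl (fun x _ => by rw [hω a x]; ring)
  have e2 : ∑ y, ω b y * (1/2 * T a y c d) = -∑ x, ω x b * (1/2 * T a x c d) := by
    rw [← Finset.sum_neg_distrib]
    exact Finset.sum_congr rfl (fun x _ => by rw [hω b x]; ring)
  have e3 : ∑ y, ω c y * (1/2 * T a b y d) = -∑ x, ω x c * (1/2 * T a b x d) := by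
    rw [← Finset.sum_neg_distrib]
    exact Finset.sum_congr rfl (fun x _ => by rw [hω c x]; ring)
  have e4 : ∑ y, ω d y * (1/2 * T a b c y) = -∑ x, ω x d * (1/2 * T a b c x) := by
    rw [← Finset.sum_neg_distrib]
    exact Finset.sum_congr rfl (fun x _ => by rw [hω d x]; ring)
  have q1 : (2:ℝ) * ∑ x, ω x a * (1/2 * T x b c d) = ∑ x, ω x a * T x b c d := by
    rw [Finset.mul_sum]
    exact Finset.sum_congr rfl (fun x _ => by ring)
  have q2 : (2:ℝ) * ∑ x, ω x b * (1/2 * T a x c d) = ∑ x, ω x b * T a x c d := by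
    rw [Finset.mul_sum]
    exact Finset.sum_congr rfl (fun x _ => by ring)
  have q3 : (2:ℝ) * ∑ x, ω x c * (1/2 * T a b x d) = ∑ x, ω x c * T a b x d := by
    rw [Finset.mul_sum]
    exact Finset.sum_congr rfl (fun x _ => by ring)
  have q4 : (2:ℝ) * ∑ x, ω x d * (1/2 * T a b c x) = ∑ x, ω x d * T a b c x := by
    rw [Finset.mul_sum]
    exact Finset.sum_congr rfl (fun x _ => by ring)
  rw [e1, e2, e3, e4]
  linarith [q1, q2, q3, q4]

end Statement9Aux

/-- For an algebraic curvature tensor `T` and an antisymmetric matrix `ω`: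
`Σ_{abcd} (Σ_{ij} ω_{ij} T̂_{abcdij})·(Σ_{kt} ω_{kt} T̂_{abcdkt}) ≤ 4·|ω|²·|T|²`. -/
theorem statement9 (m : ℕ) (hm : 2 ≤ m)
    (T : Fin m → Fin m → Fin m → Fin m → ℝ) (hT : IsACT T)
    (ω : Fin m → Fin m → ℝ) (hω : ∀ i j, ω i j = - ω j i) :
    (∑ a, ∑ b, ∑ c, ∑ d,
        (∑ i, ∑ j, ω i j * hat4 T a b c d i j) * (∑ k, ∑ t, ω k t * hat4 T a b c d k t))
      ≤ 4 * (∑ i, ∑ j, (ω i j) ^ 2) * (∑ a, ∑ b, ∑ c, ∑ d, (T a b c d) ^ 2) := by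
  obtain ⟨hT1, hT2, -⟩ := hT
  set G : Fin m → Fin m → Fin m → Fin m → ℝ :=
    fun a b c d => ∑ s, (ω s a * T s b c d + ω s b * T a s c d) with hGdef
  have hF : ∀ a b c d, (∑ i, ∑ j, ω i j * hat4 T a b c d i j) = G a b c d + G c d a b := by
    intro a b c d
    rw [aux9_hatF T ω hω a b c d, hGdef]
    simp only
    rw [← Finset.sum_add_distrib]
    refine Finset.sum_congr rfl (fun s _ => ?_)
    rw [hT2 a b s d, hT2 a b c s]
    ring
  have hGsq : ∀ c d, (∑ a, ∑ b, (G a b c d)^2)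
      ≤ (∑ p, ∑ q, (T p q c d)^2) * (∑ i, ∑ j, (ω i j)^2) := by
    intro c d
    have hSm : Matrix.transpose (Matrix.of (fun p q => T p q c d))
        = -(Matrix.of (fun p q => T p q c d)) := by
      ext p q
      simp only [Matrix.transpose_apply, Matrix.neg_apply, Matrix.of_apply]
      exact hT1 q p c d
    have hWm : Matrix.transpose (Matrix.of ω) = -(Matrix.of ω) := by
      ext p q
      simp only [Matrix.transpose_apply, Matrix.neg_apply, Matrix.of_apply]
      exact hω q p
    have hcomm := key_comm (Matrix.of (fun p q => T p q c d)) (Matrix.of ω) hSm hWm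
    have hent : ∀ a b, G a b c d
        = ((Matrix.of (fun p q => T p q c d)) * (Matrix.of ω)
           - (Matrix.of ω) * (Matrix.of (fun p q => T p q c d))) a b := by
      intro a b
      rw [Matrix.sub_apply, Matrix.mul_apply, Matrix.mul_apply, hGdef]
      simp only [Matrix.of_apply]
      rw [← Finset.sum_sub_distrib]
      refine Finset.sum_congr rfl (fun s _ => ?_)
      rw [hω a s]
      ring
    calc ∑ a, ∑ b, (G a b c d)^2
        = ∑ a, ∑ b, (((Matrix.of (fun p q => T p q c d)) * (Matrix.of ω)
           - (Matrix.of ω) * (Matrix.of (fun p q => T p q c d))) a b)^2 := by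
          exact Finset.sum_congr rfl (fun a _ => Finset.sum_congr rfl (fun b _ => by
            rw [hent a b]))
      _ ≤ (∑ a, ∑ b, ((Matrix.of (fun p q => T p q c d)) a b)^2)
            * (∑ a, ∑ b, ((Matrix.of ω) a b)^2) := hcomm
      _ = (∑ p, ∑ q, (T p q c d)^2) * (∑ i, ∑ j, (ω i j)^2) := rfl
  have hswapG : ∑ a, ∑ b, ∑ c, ∑ d, (G c d a b)^2 = ∑ a, ∑ b, ∑ c, ∑ d, (G a b c d)^2 :=
    aux9_swap4 (fun a b c d => (G a b c d)^2)
  have hLHS : (∑ a, ∑ b, ∑ c, ∑ d,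
        (∑ i, ∑ j, ω i j * hat4 T a b c d i j) * (∑ k, ∑ t, ω k t * hat4 T a b c d k t))
      = ∑ a, ∑ b, ∑ c, ∑ d, (G a b c d + G c d a b)^2 := by
    refine Finset.sum_congr rfl (fun a _ => Finset.sum_congr rfl (fun b _ =>
      Finset.sum_congr rfl (fun c _ => Finset.sum_congr rfl (fun d _ => ?_))))
    rw [← hF a b c d, sq]
  have step1 : ∑ a, ∑ b, ∑ c, ∑ d, (G a b c d + G c d a b)^2
      ≤ 4 * ∑ a, ∑ b, ∑ c, ∑ d, (G a b c d)^2 := by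
    have pt : ∀ a b c d : Fin m, (G a b c d + G c d a b)^2
        ≤ 2*(G a b c d)^2 + 2*(G c d a b)^2 := fun a b c d => by
      nlinarith [sq_nonneg (G a b c d - G c d a b)]
    calc ∑ a, ∑ b, ∑ c, ∑ d, (G a b c d + G c d a b)^2
        ≤ ∑ a, ∑ b, ∑ c, ∑ d, (2*(G a b c d)^2 + 2*(G c d a b)^2) := by
          refine Finset.sum_le_sum (fun a _ => Finset.sum_le_sum (fun b _ =>
            Finset.sum_le_sum (fun c _ => Finset.sum_le_sum (fun d _ => pt a b c d))))
      _ = 2 * (∑ a, ∑ b, ∑ c, ∑ d, (G a b c d)^2)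
            + 2 * (∑ a, ∑ b, ∑ c, ∑ d, (G c d a b)^2) := by
          simp only [Finset.sum_add_distrib, ← Finset.mul_sum]
      _ = 4 * ∑ a, ∑ b, ∑ c, ∑ d, (G a b c d)^2 := by rw [hswapG]; ring
  have step2 : ∑ a, ∑ b, ∑ c, ∑ d, (G a b c d)^2
      ≤ (∑ i, ∑ j, (ω i j)^2) * (∑ a, ∑ b, ∑ c, ∑ d, (T a b c d)^2) := by
    calc ∑ a, ∑ b, ∑ c, ∑ d, (G a b c d)^2
        = ∑ a, ∑ b, ∑ c, ∑ d, (G c d a b)^2 := hswapG.symm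
      _ ≤ ∑ a, ∑ b, ((∑ p, ∑ q, (T p q a b)^2) * (∑ i, ∑ j, (ω i j)^2)) := by
          refine Finset.sum_le_sum (fun a _ => Finset.sum_le_sum (fun b _ => ?_))
          exact hGsq a b
      _ = (∑ i, ∑ j, (ω i j)^2) * (∑ a, ∑ b, ∑ p, ∑ q, (T p q a b)^2) := by
          rw [Finset.mul_sum]
          refine Finset.sum_congr rfl (fun a _ => ?_)
          rw [Finset.mul_sum]
          exact Finset.sum_congr rfl (fun b _ => by ring)
      _ = (∑ i, ∑ j, (ω i j)^2) * (∑ a, ∑ b, ∑ c, ∑ d, (T a b c d)^2) := by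
          rw [aux9_swap4 (fun a b c d => (T a b c d)^2)]
  rw [hLHS]
  calc ∑ a, ∑ b, ∑ c, ∑ d, (G a b c d + G c d a b)^2
      ≤ 4 * ∑ a, ∑ b, ∑ c, ∑ d, (G a b c d)^2 := step1
    _ ≤ 4 * ((∑ i, ∑ j, (ω i j)^2) * (∑ a, ∑ b, ∑ c, ∑ d, (T a b c d)^2)) := by
        have h4 : (0:ℝ) ≤ 4 := by norm_num
        exact mul_le_mul_of_nonneg_left step2 h4
    _ = 4 * (∑ i, ∑ j, (ω i j)^2) * (∑ a, ∑ b, ∑ c, ∑ d, (T a b c d)^2) := by ring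


end

end Paper
end

section
/- Let m ≥ 1, q ≥ 1, and let R be an algebraic curvature tensor on ℝ^m with associated Lichnerowicz operator Γ. For any two q-covariant tensors Q and V on ℝ^m one has Σ R_{srkt} Q̂_{i₁…i_q s r} V̂_{i₁…i_q k t} = ⟨ΓQ, V⟩, where the sum is over all indices i₁,…,i_q, s, r, k, t ∈ {1,…,m}, and Q̂, V̂ are the (q+2)-covariant tensors associated to Q, V. -/
open Finset

namespace Paper

noncomputable section

variable {m : ℕ}

/-- The `(q+2)`-covariant tensor `Q̂` associated to a `q`-covariant tensor `Q`. -/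
def hatq {m q : ℕ} (Q : (Fin q → Fin m) → ℝ) (idx : Fin q → Fin m) (s r : Fin m) : ℝ :=
  (1 / 2) * ∑ l : Fin q,
    (Q (Function.update idx l s) * delta (idx l) r
      - Q (Function.update idx l r) * delta (idx l) s)

/-- Lichnerowicz operator `Γ` associated to `R`, acting on `q`-covariant tensors. -/
def gammaq {m q : ℕ} (R : Fin m → Fin m → Fin m → Fin m → ℝ)
    (Q : (Fin q → Fin m) → ℝ) (idx : Fin q → Fin m) : ℝ :=
  (∑ l : Fin q, ∑ j, ric R (idx l) j * Q (Function.update idx l j))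
    - ∑ l : Fin q, ∑ h : Fin q,
        if h = l then (0 : ℝ) else
          ∑ j, ∑ t, R (idx l) j (idx h) t * Q (Function.update (Function.update idx l j) h t)

section Statement10Aux

variable {q : ℕ}

private lemma act_antisym2 {R : Fin m → Fin m → Fin m → Fin m → ℝ} (hR : IsACT R)
    (i j k t : Fin m) : R i j k t = - R i j t k := by
  rw [hR.2.1 i j k t, hR.1 k t i j, hR.2.1 t k i j]

private lemma sum_delta_mul (i : Fin m) (f : Fin m → ℝ) :
    ∑ r, f r * delta i r = f i := by
  simp [delta, mul_ite, mul_one, mul_zero]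

/-- The involution `(idx, j) ↦ (update idx l j, idx l)`. -/
private def swapEquiv (l : Fin q) : ((Fin q → Fin m) × Fin m) ≃ ((Fin q → Fin m) × Fin m) where
  toFun p := (Function.update p.1 l p.2, p.1 l)
  invFun p := (Function.update p.1 l p.2, p.1 l)
  left_inv p := by simp [Prod.ext_iff, Function.update_idem]
  right_inv p := by simp [Prod.ext_iff, Function.update_idem]

private lemma sum_swap_update (l : Fin q) (F : (Fin q → Fin m) → Fin m → ℝ) :
    (∑ idx : Fin q → Fin m, ∑ j, F (Function.update idx l j) (idx l))
      = ∑ idx : Fin q → Fin m, ∑ j, F idx j := by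
  have A : (∑ p : (Fin q → Fin m) × Fin m, F (Function.update p.1 l p.2) (p.1 l))
      = ∑ idx : Fin q → Fin m, ∑ j, F (Function.update idx l j) (idx l) :=
    Fintype.sum_prod_type (f := fun p => F (Function.update p.1 l p.2) (p.1 l))
  have B : (∑ p : (Fin q → Fin m) × Fin m, F p.1 p.2)
      = ∑ idx : Fin q → Fin m, ∑ j, F idx j :=
    Fintype.sum_prod_type (f := fun p => F p.1 p.2)
  rw [← A, ← B]
  exact Fintype.sum_equiv (swapEquiv l) _ _ (fun p => rfl)

/-- Contracting one `hatq` factor against an antisymmetric matrix. -/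
private lemma hatq_contract (W : Fin m → Fin m → ℝ) (hW : ∀ s r, W s r = - W r s)
    (Q : (Fin q → Fin m) → ℝ) (idx : Fin q → Fin m) :
    (∑ s, ∑ r, W s r * hatq Q idx s r)
      = ∑ l : Fin q, ∑ s, W s (idx l) * Q (Function.update idx l s) := by
  have h1 : ∀ s r, W s r * hatq Q idx s r
      = (1/2) * ((∑ l : Fin q, W s r * Q (Function.update idx l s) * delta (idx l) r)
          - ∑ l : Fin q, W s r * Q (Function.update idx l r) * delta (idx l) s) := by
    intro s r
    rw [hatq, ← Finset.sum_sub_distrib, Finset.mul_sum, Finset.mul_sum, Finset.mul_sum]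
    refine Finset.sum_congr rfl fun l _ => by ring
  simp only [h1]
  simp only [← Finset.mul_sum]
  simp only [Finset.sum_sub_distrib]
  have h2 : (∑ s, ∑ r, ∑ l : Fin q, W s r * Q (Function.update idx l r) * delta (idx l) s)
      = - ∑ s, ∑ r, ∑ l : Fin q, W s r * Q (Function.update idx l s) * delta (idx l) r := by
    rw [Finset.sum_comm, ← Finset.sum_neg_distrib]
    refine Finset.sum_congr rfl fun s _ => ?_
    rw [← Finset.sum_neg_distrib]
    refine Finset.sum_congr rfl fun r _ => ?_
    rw [← Finset.sum_neg_distrib]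
    refine Finset.sum_congr rfl fun l _ => ?_
    rw [hW r s]; ring
  have h3 : (∑ s, ∑ r, ∑ l : Fin q, W s r * Q (Function.update idx l s) * delta (idx l) r)
      = ∑ l : Fin q, ∑ s, W s (idx l) * Q (Function.update idx l s) := by
    have hc : ∀ s : Fin m, (∑ r, ∑ l : Fin q, W s r * Q (Function.update idx l s) * delta (idx l) r)
        = ∑ l : Fin q, ∑ r, W s r * Q (Function.update idx l s) * delta (idx l) r :=
      fun s => Finset.sum_comm
    simp only [hc]
    rw [Finset.sum_comm]
    refine Finset.sum_congr rfl fun l _ => Finset.sum_congr rfl fun s _ => ?_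
    exact sum_delta_mul (idx l) (fun r => W s r * Q (Function.update idx l s))
  rw [h2, h3]
  ring

private lemma diag_eq {R : Fin m → Fin m → Fin m → Fin m → ℝ} (hR : IsACT R)
    (Q V : (Fin q → Fin m) → ℝ) (l : Fin q) :
    (∑ idx : Fin q → Fin m, ∑ k, ∑ s,
        R s (idx l) k (idx l) * Q (Function.update idx l s) * V (Function.update idx l k))
      = ∑ idx : Fin q → Fin m,
          (∑ j, ric R (idx l) j * Q (Function.update idx l j)) * V idx := by
  have ricid : ∀ s j : Fin m, (∑ t, R s t j t) = ric R j s := by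
    intro s j
    rw [ric]
    refine Finset.sum_congr rfl fun t _ => ?_
    calc R s t j t = - R s t t j := act_antisym2 hR s t j t
      _ = - - R t s t j := by rw [hR.1 s t t j]
      _ = R t j t s := by rw [neg_neg, hR.2.1 t s t j]
  have key := sum_swap_update l
    (fun J t => ∑ s, R s t (J l) t * Q (Function.update J l s) * V J)
  calc (∑ idx : Fin q → Fin m, ∑ k, ∑ s,
        R s (idx l) k (idx l) * Q (Function.update idx l s) * V (Function.update idx l k))
      = ∑ idx : Fin q → Fin m, ∑ k, ∑ s,
          R s (idx l) (Function.update idx l k l) (idx l) *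
            Q (Function.update (Function.update idx l k) l s) *
            V (Function.update idx l k) := by
        refine Finset.sum_congr rfl fun idx _ => Finset.sum_congr rfl fun k _ =>
          Finset.sum_congr rfl fun s _ => ?_
        rw [Function.update_self, Function.update_idem]
    _ = ∑ idx : Fin q → Fin m, ∑ t, ∑ s,
          R s t (idx l) t * Q (Function.update idx l s) * V idx := key
    _ = ∑ idx : Fin q → Fin m, (∑ j, ric R (idx l) j * Q (Function.update idx l j)) * V idx := by
        refine Finset.sum_congr rfl fun idx _ => ?_
        rw [Finset.sum_comm, Finset.sum_mul]
        refine Finset.sum_congr rfl fun s _ => ?_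
        rw [← ricid s (idx l), Finset.sum_mul, Finset.sum_mul]

private lemma offdiag_eq {R : Fin m → Fin m → Fin m → Fin m → ℝ} (hR : IsACT R)
    (Q V : (Fin q → Fin m) → ℝ) (l h : Fin q) (hlh : l ≠ h) :
    (∑ idx : Fin q → Fin m, ∑ k, ∑ s,
        R s (idx l) k (idx h) * Q (Function.update idx l s) * V (Function.update idx h k))
      = ∑ idx : Fin q → Fin m,
          (- ∑ j, ∑ t, R (idx l) j (idx h) t *
              Q (Function.update (Function.update idx l j) h t)) * V idx := by
  have key := sum_swap_update h
    (fun J t => ∑ s, R s (J l) (J h) t *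
      Q (Function.update (Function.update J l s) h t) * V J)
  calc (∑ idx : Fin q → Fin m, ∑ k, ∑ s,
        R s (idx l) k (idx h) * Q (Function.update idx l s) * V (Function.update idx h k))
      = ∑ idx : Fin q → Fin m, ∑ k, ∑ s,
          R s (Function.update idx h k l) (Function.update idx h k h) (idx h) *
            Q (Function.update (Function.update (Function.update idx h k) l s) h (idx h)) *
            V (Function.update idx h k) := by
        refine Finset.sum_congr rfl fun idx _ => Finset.sum_congr rfl fun k _ =>
          Finset.sum_congr rfl fun s _ => ?_
        rw [Function.update_of_ne hlh, Function.update_self,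
          Function.update_comm hlh, Function.update_idem, Function.update_eq_self]
    _ = ∑ idx : Fin q → Fin m, ∑ t, ∑ s,
          R s (idx l) (idx h) t *
            Q (Function.update (Function.update idx l s) h t) * V idx := key
    _ = ∑ idx : Fin q → Fin m,
          (- ∑ j, ∑ t, R (idx l) j (idx h) t *
              Q (Function.update (Function.update idx l j) h t)) * V idx := by
        refine Finset.sum_congr rfl fun idx _ => ?_
        rw [show (∑ t, ∑ s, R s (idx l) (idx h) t *
              Q (Function.update (Function.update idx l s) h t) * V idx)
            = ∑ s, ∑ t, R s (idx l) (idx h) t *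
              Q (Function.update (Function.update idx l s) h t) * V idx from Finset.sum_comm]
        rw [neg_mul]
        conv_rhs => rw [Finset.sum_mul]
        rw [← Finset.sum_neg_distrib]
        refine Finset.sum_congr rfl fun s _ => ?_
        conv_rhs => rw [Finset.sum_mul]
        rw [← Finset.sum_neg_distrib]
        refine Finset.sum_congr rfl fun t _ => ?_
        rw [hR.1 s (idx l) (idx h) t]
        ring

private lemma sum_split_diag (h : Fin q) (f : Fin q → ℝ) :
    (∑ l, f l) = f h + ∑ l, if l = h then 0 else f l := by
  have h1 : ∀ l : Fin q, f l = (if l = h then f l else 0) + (if l = h then 0 else f l) := by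
    intro l; by_cases hl : l = h <;> simp [hl]
  rw [Finset.sum_congr rfl (fun l _ => h1 l), Finset.sum_add_distrib,
    Finset.sum_ite_eq' Finset.univ h f]
  simp

private lemma reorder4 (f : Fin m → Fin m → Fin q → Fin m → ℝ) :
    (∑ s, ∑ r, ∑ h : Fin q, ∑ k, f s r h k)
      = ∑ h : Fin q, ∑ k, ∑ s, ∑ r, f s r h k := by
  calc (∑ s, ∑ r, ∑ h : Fin q, ∑ k, f s r h k)
      = ∑ s, ∑ h : Fin q, ∑ r, ∑ k, f s r h k :=
        Finset.sum_congr rfl fun s _ => Finset.sum_comm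
    _ = ∑ h : Fin q, ∑ s, ∑ r, ∑ k, f s r h k := Finset.sum_comm
    _ = ∑ h : Fin q, ∑ s, ∑ k, ∑ r, f s r h k :=
        Finset.sum_congr rfl fun h _ => Finset.sum_congr rfl fun s _ => Finset.sum_comm
    _ = ∑ h : Fin q, ∑ k, ∑ s, ∑ r, f s r h k :=
        Finset.sum_congr rfl fun h _ => Finset.sum_comm

end Statement10Aux

/-- `Σ R_{srkt} Q̂_{i₁…i_q s r} V̂_{i₁…i_q k t} = ⟨ΓQ, V⟩`. -/
theorem statement10 (m q : ℕ) (hm : 1 ≤ m) (hq : 1 ≤ q)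
    (R : Fin m → Fin m → Fin m → Fin m → ℝ) (hR : IsACT R)
    (Q V : (Fin q → Fin m) → ℝ) :
    (∑ idx : Fin q → Fin m, ∑ s, ∑ r, ∑ k, ∑ t,
        R s r k t * hatq Q idx s r * hatq V idx k t)
      = ∑ idx : Fin q → Fin m, gammaq R Q idx * V idx := by
  classical
  have main : ∀ idx : Fin q → Fin m,
      (∑ s, ∑ r, ∑ k, ∑ t, R s r k t * hatq Q idx s r * hatq V idx k t)
        = ∑ h : Fin q, ∑ l : Fin q, ∑ k, ∑ s,
            R s (idx l) k (idx h) * Q (Function.update idx l s) *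
              V (Function.update idx h k) := by
    intro idx
    calc (∑ s, ∑ r, ∑ k, ∑ t, R s r k t * hatq Q idx s r * hatq V idx k t)
        = ∑ s, ∑ r, (∑ k, ∑ t, R s r k t * hatq V idx k t) * hatq Q idx s r := by
          refine Finset.sum_congr rfl fun s _ => Finset.sum_congr rfl fun r _ => ?_
          rw [Finset.sum_mul]
          refine Finset.sum_congr rfl fun k _ => ?_
          rw [Finset.sum_mul]
          exact Finset.sum_congr rfl fun t _ => by ring
      _ = ∑ s, ∑ r, (∑ h : Fin q, ∑ k, R s r k (idx h) * V (Function.update idx h k)) *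
            hatq Q idx s r := by
          refine Finset.sum_congr rfl fun s _ => Finset.sum_congr rfl fun r _ => ?_
          rw [hatq_contract (fun k t => R s r k t) (fun k t => act_antisym2 hR s r k t) V idx]
      _ = ∑ s, ∑ r, ∑ h : Fin q, ∑ k,
            R s r k (idx h) * hatq Q idx s r * V (Function.update idx h k) := by
          refine Finset.sum_congr rfl fun s _ => Finset.sum_congr rfl fun r _ => ?_
          rw [Finset.sum_mul]
          refine Finset.sum_congr rfl fun h _ => ?_
          rw [Finset.sum_mul]
          exact Finset.sum_congr rfl fun k _ => by ring
      _ = ∑ h : Fin q, ∑ k, ∑ s, ∑ r,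
            R s r k (idx h) * hatq Q idx s r * V (Function.update idx h k) := reorder4 _
      _ = ∑ h : Fin q, ∑ k, (∑ s, ∑ r, R s r k (idx h) * hatq Q idx s r) *
            V (Function.update idx h k) := by
          refine Finset.sum_congr rfl fun h _ => Finset.sum_congr rfl fun k _ => ?_
          rw [Finset.sum_mul]
          exact Finset.sum_congr rfl fun s _ => (Finset.sum_mul _ _ _).symm
      _ = ∑ h : Fin q, ∑ k, (∑ l : Fin q, ∑ s,
            R s (idx l) k (idx h) * Q (Function.update idx l s)) *
            V (Function.update idx h k) := by
          refine Finset.sum_congr rfl fun h _ => Finset.sum_congr rfl fun k _ => ?_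
          rw [hatq_contract (fun s r => R s r k (idx h)) (fun s r => hR.1 s r k (idx h)) Q idx]
      _ = ∑ h : Fin q, ∑ l : Fin q, ∑ k, ∑ s,
            R s (idx l) k (idx h) * Q (Function.update idx l s) *
              V (Function.update idx h k) := by
          refine Finset.sum_congr rfl fun h _ => ?_
          calc (∑ k, (∑ l : Fin q, ∑ s,
                R s (idx l) k (idx h) * Q (Function.update idx l s)) *
                  V (Function.update idx h k))
              = ∑ k, ∑ l : Fin q, ∑ s,
                  R s (idx l) k (idx h) * Q (Function.update idx l s) *
                    V (Function.update idx h k) := by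
                refine Finset.sum_congr rfl fun k _ => ?_
                rw [Finset.sum_mul]
                exact Finset.sum_congr rfl fun l _ => Finset.sum_mul _ _ _
            _ = ∑ l : Fin q, ∑ k, ∑ s,
                  R s (idx l) k (idx h) * Q (Function.update idx l s) *
                    V (Function.update idx h k) := Finset.sum_comm
  calc (∑ idx : Fin q → Fin m, ∑ s, ∑ r, ∑ k, ∑ t,
        R s r k t * hatq Q idx s r * hatq V idx k t)
      = ∑ idx : Fin q → Fin m, ∑ h : Fin q, ∑ l : Fin q, ∑ k, ∑ s,
          R s (idx l) k (idx h) * Q (Function.update idx l s) *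
            V (Function.update idx h k) :=
        Finset.sum_congr rfl fun idx _ => main idx
    _ = ∑ idx : Fin q → Fin m, ∑ h : Fin q,
          ((∑ k, ∑ s, R s (idx h) k (idx h) * Q (Function.update idx h s) *
              V (Function.update idx h k))
            + ∑ l : Fin q, if l = h then 0 else
                ∑ k, ∑ s, R s (idx l) k (idx h) * Q (Function.update idx l s) *
                  V (Function.update idx h k)) :=
        Finset.sum_congr rfl fun idx _ => Finset.sum_congr rfl fun h _ =>
          sum_split_diag h _
    _ = (∑ idx : Fin q → Fin m, ∑ h : Fin q, ∑ k, ∑ s,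
          R s (idx h) k (idx h) * Q (Function.update idx h s) *
            V (Function.update idx h k))
        + ∑ idx : Fin q → Fin m, ∑ h : Fin q, ∑ l : Fin q, if l = h then 0 else
            ∑ k, ∑ s, R s (idx l) k (idx h) * Q (Function.update idx l s) *
              V (Function.update idx h k) := by
        simp only [Finset.sum_add_distrib]
    _ = (∑ idx : Fin q → Fin m,
          (∑ h : Fin q, ∑ j, ric R (idx h) j * Q (Function.update idx h j)) * V idx)
        + ∑ idx : Fin q → Fin m,
            (- ∑ l : Fin q, ∑ h : Fin q, if h = l then 0 else
                ∑ j, ∑ t, R (idx l) j (idx h) t *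
                  Q (Function.update (Function.update idx l j) h t)) * V idx := by
        congr 1
        · calc (∑ idx : Fin q → Fin m, ∑ h : Fin q, ∑ k, ∑ s,
                R s (idx h) k (idx h) * Q (Function.update idx h s) *
                  V (Function.update idx h k))
              = ∑ h : Fin q, ∑ idx : Fin q → Fin m, ∑ k, ∑ s,
                  R s (idx h) k (idx h) * Q (Function.update idx h s) *
                    V (Function.update idx h k) := Finset.sum_comm
            _ = ∑ h : Fin q, ∑ idx : Fin q → Fin m,
                  (∑ j, ric R (idx h) j * Q (Function.update idx h j)) * V idx :=
                Finset.sum_congr rfl fun h _ => diag_eq hR Q V h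
            _ = ∑ idx : Fin q → Fin m, ∑ h : Fin q,
                  (∑ j, ric R (idx h) j * Q (Function.update idx h j)) * V idx :=
                Finset.sum_comm
            _ = ∑ idx : Fin q → Fin m,
                  (∑ h : Fin q, ∑ j, ric R (idx h) j * Q (Function.update idx h j)) * V idx :=
                Finset.sum_congr rfl fun idx _ => (Finset.sum_mul _ _ _).symm
        · calc (∑ idx : Fin q → Fin m, ∑ h : Fin q, ∑ l : Fin q, if l = h then 0 else
                ∑ k, ∑ s, R s (idx l) k (idx h) * Q (Function.update idx l s) *
                  V (Function.update idx h k))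
              = ∑ h : Fin q, ∑ idx : Fin q → Fin m, ∑ l : Fin q, if l = h then 0 else
                  ∑ k, ∑ s, R s (idx l) k (idx h) * Q (Function.update idx l s) *
                    V (Function.update idx h k) := Finset.sum_comm
            _ = ∑ h : Fin q, ∑ l : Fin q, ∑ idx : Fin q → Fin m, if l = h then 0 else
                  ∑ k, ∑ s, R s (idx l) k (idx h) * Q (Function.update idx l s) *
                    V (Function.update idx h k) :=
                Finset.sum_congr rfl fun h _ => Finset.sum_comm
            _ = ∑ h : Fin q, ∑ l : Fin q, ∑ idx : Fin q → Fin m, if l = h then 0 else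
                  (- ∑ j, ∑ t, R (idx l) j (idx h) t *
                      Q (Function.update (Function.update idx l j) h t)) * V idx := by
                refine Finset.sum_congr rfl fun h _ => Finset.sum_congr rfl fun l _ => ?_
                by_cases hlh : l = h
                · simp [hlh]
                · simp only [if_neg hlh]
                  exact offdiag_eq hR Q V l h hlh
            _ = ∑ h : Fin q, ∑ idx : Fin q → Fin m, ∑ l : Fin q, if l = h then 0 else
                  (- ∑ j, ∑ t, R (idx l) j (idx h) t *
                      Q (Function.update (Function.update idx l j) h t)) * V idx :=
                Finset.sum_congr rfl fun h _ => Finset.sum_comm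
            _ = ∑ idx : Fin q → Fin m, ∑ h : Fin q, ∑ l : Fin q, if l = h then 0 else
                  (- ∑ j, ∑ t, R (idx l) j (idx h) t *
                      Q (Function.update (Function.update idx l j) h t)) * V idx :=
                Finset.sum_comm
            _ = ∑ idx : Fin q → Fin m,
                  (- ∑ l : Fin q, ∑ h : Fin q, if h = l then 0 else
                      ∑ j, ∑ t, R (idx l) j (idx h) t *
                        Q (Function.update (Function.update idx l j) h t)) * V idx := by
                refine Finset.sum_congr rfl fun idx _ => ?_
                calc (∑ h : Fin q, ∑ l : Fin q, if l = h then 0 else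
                      (- ∑ j, ∑ t, R (idx l) j (idx h) t *
                          Q (Function.update (Function.update idx l j) h t)) * V idx)
                    = ∑ l : Fin q, ∑ h : Fin q, if l = h then 0 else
                        (- ∑ j, ∑ t, R (idx l) j (idx h) t *
                            Q (Function.update (Function.update idx l j) h t)) * V idx :=
                      Finset.sum_comm
                  _ = ∑ l : Fin q, ∑ h : Fin q, if h = l then 0 else
                        - ((∑ j, ∑ t, R (idx l) j (idx h) t *
                            Q (Function.update (Function.update idx l j) h t)) * V idx) := by
                      refine Finset.sum_congr rfl fun l _ => Finset.sum_congr rfl fun h _ => ?_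
                      by_cases hlh : l = h
                      · simp [hlh]
                      · rw [if_neg hlh, if_neg (fun e => hlh e.symm), neg_mul]
                  _ = (- ∑ l : Fin q, ∑ h : Fin q, if h = l then 0 else
                        ∑ j, ∑ t, R (idx l) j (idx h) t *
                          Q (Function.update (Function.update idx l j) h t)) * V idx := by
                      rw [neg_mul]
                      conv_rhs => rw [Finset.sum_mul]
                      rw [← Finset.sum_neg_distrib]
                      refine Finset.sum_congr rfl fun l _ => ?_
                      conv_rhs => rw [Finset.sum_mul]
                      rw [← Finset.sum_neg_distrib]
                      refine Finset.sum_congr rfl fun h _ => ?_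
                      by_cases hlh : h = l
                      · simp [hlh]
                      · rw [if_neg hlh, if_neg hlh]
    _ = ∑ idx : Fin q → Fin m, gammaq R Q idx * V idx := by
        rw [← Finset.sum_add_distrib]
        refine Finset.sum_congr rfl fun idx _ => ?_
        rw [gammaq]
        ring

end

end Paper
end

section
/- Let m ≥ 3 and let T be an algebraic curvature tensor on ℝ^m with Ricci contraction E_T, total trace S_T, traceless Ricci part Z_T, Weyl part W_T, and pseudo-projective tensor P_T. Then |P_T|² = |T|² − (2/(m−1))·|E_T|² = |W_T|² + (2m/((m−2)(m−1)))·|Z_T|². In particular, P_T = 0 if and only if T = (S_T/(2m(m−1)))·δ⊙δ. -/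
open Finset

namespace Paper

noncomputable section

variable {m : ℕ}

/-! ### Auxiliary lemmas for Statement 11 -/

section Aux11

variable (T : Fin m → Fin m → Fin m → Fin m → ℝ)

theorem aux2 (hT : IsACT T) (i j k t : Fin m) : T i j k t = - T i j t k := by
  have h1 := hT.2.1 i j k t
  have h2 := hT.1 k t i j
  have h3 := hT.2.1 t k i j
  linarith

theorem ric_symm (hT : IsACT T) (i j : Fin m) : ric T i j = ric T j i :=
  Finset.sum_congr rfl fun k _ => hT.2.1 k i k j

theorem ptA (hT : IsACT T) (i k s : Fin m) : T i s k s = T s k s i := by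
  have h1 := hT.2.1 i s k s
  have h2 := hT.1 k s i s
  have h3 := aux2 T hT s k i s
  linarith

theorem sumA (hT : IsACT T) (i k : Fin m) : (∑ s, T i s k s) = ric T k i :=
  Finset.sum_congr rfl fun s _ => ptA T hT i k s

theorem sumB (hT : IsACT T) (i t : Fin m) : (∑ s, T i s s t) = - ric T t i := by
  rw [ric, ← Finset.sum_neg_distrib]
  refine Finset.sum_congr rfl fun s _ => ?_
  have h1 := aux2 T hT i s s t
  have h2 := ptA T hT i t s
  linarith

theorem sumC (hT : IsACT T) (j k : Fin m) : (∑ s, T s j k s) = - ric T j k := by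
  rw [ric, ← Finset.sum_neg_distrib]
  exact Finset.sum_congr rfl fun s _ => by have := aux2 T hT s j k s; linarith

theorem e1 (E : Fin m → Fin m → ℝ) :
    (∑ i, ∑ j, ∑ k, ∑ t, T i j k t * (delta i k * E j t)) = ∑ j, ∑ t, ric T j t * E j t := by
  simp [delta, mul_ite, ite_mul, Finset.mul_sum, Finset.sum_mul]
  rw [Finset.sum_comm]
  refine Finset.sum_congr rfl fun j _ => ?_
  rw [Finset.sum_comm]
  exact Finset.sum_congr rfl fun t _ => by rw [ric, Finset.sum_mul]

theorem e2 (hT : IsACT T) (E : Fin m → Fin m → ℝ) :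
    (∑ i, ∑ j, ∑ k, ∑ t, T i j k t * (delta i t * E j k)) = -∑ j, ∑ k, ric T j k * E j k := by
  simp [delta, mul_ite, ite_mul, Finset.mul_sum, Finset.sum_mul]
  rw [Finset.sum_comm, ← Finset.sum_neg_distrib]
  refine Finset.sum_congr rfl fun j _ => ?_
  rw [Finset.sum_comm, ← Finset.sum_neg_distrib]
  refine Finset.sum_congr rfl fun k _ => ?_
  rw [← Finset.sum_mul, sumC T hT j k, neg_mul]

theorem g1 (hT : IsACT T) (E : Fin m → Fin m → ℝ) :
    (∑ i, ∑ j, ∑ k, ∑ t, T i j k t * (E i k * delta j t)) = ∑ i, ∑ k, ric T i k * E i k := by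
  simp [delta, mul_ite, ite_mul, Finset.mul_sum, Finset.sum_mul]
  refine Finset.sum_congr rfl fun i _ => ?_
  rw [Finset.sum_comm]
  refine Finset.sum_congr rfl fun k _ => ?_
  rw [← Finset.sum_mul, sumA T hT i k, ric_symm T hT k i]

theorem g2 (E : Fin m → Fin m → ℝ) :
    (∑ i, ∑ j, ∑ k, ∑ t, T i j k t * (E j t * delta i k)) = ∑ j, ∑ t, ric T j t * E j t := by
  simp [delta, mul_ite, ite_mul, Finset.mul_sum, Finset.sum_mul]
  rw [Finset.sum_comm]
  refine Finset.sum_congr rfl fun j _ => ?_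
  rw [Finset.sum_comm]
  exact Finset.sum_congr rfl fun t _ => by rw [ric, Finset.sum_mul]

theorem g3 (hT : IsACT T) (E : Fin m → Fin m → ℝ) :
    (∑ i, ∑ j, ∑ k, ∑ t, T i j k t * (E i t * delta j k)) = -∑ i, ∑ t, ric T i t * E i t := by
  simp [delta, mul_ite, ite_mul, Finset.mul_sum, Finset.sum_mul]
  rw [← Finset.sum_neg_distrib]
  refine Finset.sum_congr rfl fun i _ => ?_
  rw [Finset.sum_comm, ← Finset.sum_neg_distrib]
  refine Finset.sum_congr rfl fun t _ => ?_
  rw [← Finset.sum_mul, sumB T hT i t, ric_symm T hT t i, neg_mul]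

theorem g4 (hT : IsACT T) (E : Fin m → Fin m → ℝ) :
    (∑ i, ∑ j, ∑ k, ∑ t, T i j k t * (E j k * delta i t)) = -∑ j, ∑ k, ric T j k * E j k := by
  simp [delta, mul_ite, ite_mul, Finset.mul_sum, Finset.sum_mul]
  rw [Finset.sum_comm, ← Finset.sum_neg_distrib]
  refine Finset.sum_congr rfl fun j _ => ?_
  rw [Finset.sum_comm, ← Finset.sum_neg_distrib]
  refine Finset.sum_congr rfl fun k _ => ?_
  rw [← Finset.sum_mul, sumC T hT j k, neg_mul]

end Aux11

section Aux11d

theorem f11 (E F : Fin m → Fin m → ℝ) :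
    (∑ i : Fin m, ∑ j : Fin m, ∑ k : Fin m, ∑ t : Fin m, (delta i k * E j t) * (delta i k * F j t))
      = (m : ℝ) * ∑ j, ∑ t, E j t * F j t := by
  simp [delta, mul_ite, ite_mul, Finset.mul_sum, Finset.sum_mul]

theorem f22 (E F : Fin m → Fin m → ℝ) :
    (∑ i : Fin m, ∑ j : Fin m, ∑ k : Fin m, ∑ t : Fin m, (delta i t * E j k) * (delta i t * F j k))
      = (m : ℝ) * ∑ j, ∑ k, E j k * F j k := by
  simp [delta, mul_ite, ite_mul, Finset.mul_sum, Finset.sum_mul]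

theorem f12 (E F : Fin m → Fin m → ℝ) :
    (∑ i : Fin m, ∑ j : Fin m, ∑ k : Fin m, ∑ t : Fin m, (delta i k * E j t) * (delta i t * F j k))
      = ∑ a, ∑ b, E a b * F a b := by
  simp [delta, mul_ite, ite_mul, Finset.mul_sum, Finset.sum_mul]
  rw [Finset.sum_comm]

theorem f21 (E F : Fin m → Fin m → ℝ) :
    (∑ i : Fin m, ∑ j : Fin m, ∑ k : Fin m, ∑ t : Fin m, (delta i t * E j k) * (delta i k * F j t))
      = ∑ a, ∑ b, E a b * F a b := by
  simp [delta, mul_ite, ite_mul, Finset.mul_sum, Finset.sum_mul]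
  rw [Finset.sum_comm]

theorem q11 (M N : Fin m → Fin m → ℝ) :
    (∑ i : Fin m, ∑ j : Fin m, ∑ k : Fin m, ∑ t : Fin m, (M i k * delta j t) * (N i k * delta j t))
      = (m : ℝ) * ∑ a, ∑ b, M a b * N a b := by
  simp [delta, mul_ite, ite_mul, Finset.mul_sum, Finset.sum_mul]

theorem q22 (M N : Fin m → Fin m → ℝ) :
    (∑ i : Fin m, ∑ j : Fin m, ∑ k : Fin m, ∑ t : Fin m, (M j t * delta i k) * (N j t * delta i k))
      = (m : ℝ) * ∑ a, ∑ b, M a b * N a b := by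
  simp [delta, mul_ite, ite_mul, Finset.mul_sum, Finset.sum_mul]

theorem q33 (M N : Fin m → Fin m → ℝ) :
    (∑ i : Fin m, ∑ j : Fin m, ∑ k : Fin m, ∑ t : Fin m, (M i t * delta j k) * (N i t * delta j k))
      = (m : ℝ) * ∑ a, ∑ b, M a b * N a b := by
  simp [delta, mul_ite, ite_mul, Finset.mul_sum, Finset.sum_mul]

theorem q44 (M N : Fin m → Fin m → ℝ) :
    (∑ i : Fin m, ∑ j : Fin m, ∑ k : Fin m, ∑ t : Fin m, (M j k * delta i t) * (N j k * delta i t))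
      = (m : ℝ) * ∑ a, ∑ b, M a b * N a b := by
  simp [delta, mul_ite, ite_mul, Finset.mul_sum, Finset.sum_mul]

theorem q12 (M N : Fin m → Fin m → ℝ) :
    (∑ i : Fin m, ∑ j : Fin m, ∑ k : Fin m, ∑ t : Fin m, (M i k * delta j t) * (N j t * delta i k))
      = (∑ a, M a a) * (∑ a, N a a) := by
  simp [delta, mul_ite, ite_mul, Finset.mul_sum, Finset.sum_mul]
  rw [Finset.sum_comm]

theorem q21 (M N : Fin m → Fin m → ℝ) :
    (∑ i : Fin m, ∑ j : Fin m, ∑ k : Fin m, ∑ t : Fin m, (M j t * delta i k) * (N i k * delta j t))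
      = (∑ a, M a a) * (∑ a, N a a) := by
  simp [delta, mul_ite, ite_mul, Finset.mul_sum, Finset.sum_mul]

theorem q34 (M N : Fin m → Fin m → ℝ) :
    (∑ i : Fin m, ∑ j : Fin m, ∑ k : Fin m, ∑ t : Fin m, (M i t * delta j k) * (N j k * delta i t))
      = (∑ a, M a a) * (∑ a, N a a) := by
  simp [delta, mul_ite, ite_mul, Finset.mul_sum, Finset.sum_mul]
  rw [Finset.sum_comm]

theorem q43 (M N : Fin m → Fin m → ℝ) :
    (∑ i : Fin m, ∑ j : Fin m, ∑ k : Fin m, ∑ t : Fin m, (M j k * delta i t) * (N i t * delta j k))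
      = (∑ a, M a a) * (∑ a, N a a) := by
  simp [delta, mul_ite, ite_mul, Finset.mul_sum, Finset.sum_mul]

theorem q13 (M N : Fin m → Fin m → ℝ) :
    (∑ i : Fin m, ∑ j : Fin m, ∑ k : Fin m, ∑ t : Fin m, (M i k * delta j t) * (N i t * delta j k))
      = ∑ a, ∑ b, M a b * N a b := by
  simp [delta, mul_ite, ite_mul, Finset.mul_sum, Finset.sum_mul]

theorem q31 (M N : Fin m → Fin m → ℝ) :
    (∑ i : Fin m, ∑ j : Fin m, ∑ k : Fin m, ∑ t : Fin m, (M i t * delta j k) * (N i k * delta j t))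
      = ∑ a, ∑ b, M a b * N a b := by
  simp [delta, mul_ite, ite_mul, Finset.mul_sum, Finset.sum_mul]

theorem q14 (M N : Fin m → Fin m → ℝ) :
    (∑ i : Fin m, ∑ j : Fin m, ∑ k : Fin m, ∑ t : Fin m, (M i k * delta j t) * (N j k * delta i t))
      = ∑ a, ∑ b, M a b * N a b := by
  simp [delta, mul_ite, ite_mul, Finset.mul_sum, Finset.sum_mul]

theorem q41 (M N : Fin m → Fin m → ℝ) :
    (∑ i : Fin m, ∑ j : Fin m, ∑ k : Fin m, ∑ t : Fin m, (M j k * delta i t) * (N i k * delta j t))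
      = ∑ a, ∑ b, M a b * N a b := by
  simp [delta, mul_ite, ite_mul, Finset.mul_sum, Finset.sum_mul]

theorem q23 (M N : Fin m → Fin m → ℝ) :
    (∑ i : Fin m, ∑ j : Fin m, ∑ k : Fin m, ∑ t : Fin m, (M j t * delta i k) * (N i t * delta j k))
      = ∑ a, ∑ b, M a b * N a b := by
  simp [delta, mul_ite, ite_mul, Finset.mul_sum, Finset.sum_mul]

theorem q32 (M N : Fin m → Fin m → ℝ) :
    (∑ i : Fin m, ∑ j : Fin m, ∑ k : Fin m, ∑ t : Fin m, (M i t * delta j k) * (N j t * delta i k))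
      = ∑ a, ∑ b, M a b * N a b := by
  simp [delta, mul_ite, ite_mul, Finset.mul_sum, Finset.sum_mul]

theorem q24 (M N : Fin m → Fin m → ℝ) :
    (∑ i : Fin m, ∑ j : Fin m, ∑ k : Fin m, ∑ t : Fin m, (M j t * delta i k) * (N j k * delta i t))
      = ∑ a, ∑ b, M a b * N a b := by
  simp [delta, mul_ite, ite_mul, Finset.mul_sum, Finset.sum_mul]
  rw [Finset.sum_comm]

theorem q42 (M N : Fin m → Fin m → ℝ) :
    (∑ i : Fin m, ∑ j : Fin m, ∑ k : Fin m, ∑ t : Fin m, (M j k * delta i t) * (N j t * delta i k))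
      = ∑ a, ∑ b, M a b * N a b := by
  simp [delta, mul_ite, ite_mul, Finset.mul_sum, Finset.sum_mul]
  rw [Finset.sum_comm]

end Aux11d
section Aux11e

theorem inner4_expand (X Y : Fin m → Fin m → Fin m → Fin m → ℝ) (c : ℝ) :
    inner4 (fun i j k t => X i j k t - c * Y i j k t) (fun i j k t => X i j k t - c * Y i j k t)
      = inner4 X X - 2 * c * inner4 X Y + c ^ 2 * inner4 Y Y := by
  simp only [inner4]
  have h : ∀ i j k t : Fin m,
      (X i j k t - c * Y i j k t) * (X i j k t - c * Y i j k t)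
        = X i j k t * X i j k t - 2 * c * (X i j k t * Y i j k t)
            + c ^ 2 * (Y i j k t * Y i j k t) := fun i j k t => by ring
  simp_rw [h, Finset.sum_add_distrib, Finset.sum_sub_distrib, ← Finset.mul_sum]

theorem inner2_expand (X Y : Fin m → Fin m → ℝ) (c : ℝ) :
    inner2 (fun i j => X i j - c * Y i j) (fun i j => X i j - c * Y i j)
      = inner2 X X - 2 * c * inner2 X Y + c ^ 2 * inner2 Y Y := by
  simp only [inner2]
  have h : ∀ i j : Fin m,
      (X i j - c * Y i j) * (X i j - c * Y i j)
        = X i j * X i j - 2 * c * (X i j * Y i j) + c ^ 2 * (Y i j * Y i j) :=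
    fun i j => by ring
  simp_rw [h, Finset.sum_add_distrib, Finset.sum_sub_distrib, ← Finset.mul_sum]

theorem inner2_sub_right (X Y Z : Fin m → Fin m → ℝ) (c : ℝ) :
    inner2 X (fun i j => Y i j - c * Z i j) = inner2 X Y - c * inner2 X Z := by
  simp only [inner2]
  have h : ∀ i j : Fin m,
      X i j * (Y i j - c * Z i j) = X i j * Y i j - c * (X i j * Z i j) := fun i j => by ring
  simp_rw [h, Finset.sum_sub_distrib, ← Finset.mul_sum]

set_option maxHeartbeats 1000000 in
theorem knAA (A : Fin m → Fin m → ℝ) :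
    inner4 (kn A delta) (kn A delta)
      = 4 * ((m : ℝ) - 2) * inner2 A A + 4 * (∑ a, A a a) ^ 2 := by
  simp only [inner4]
  have h : ∀ i j k t : Fin m,
      kn A delta i j k t * kn A delta i j k t
        = (A i k * delta j t) * (A i k * delta j t)
          + (A i k * delta j t) * (A j t * delta i k)
          - (A i k * delta j t) * (A i t * delta j k)
          - (A i k * delta j t) * (A j k * delta i t)
          + (A j t * delta i k) * (A i k * delta j t)
          + (A j t * delta i k) * (A j t * delta i k)
          - (A j t * delta i k) * (A i t * delta j k)
          - (A j t * delta i k) * (A j k * delta i t)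
          - (A i t * delta j k) * (A i k * delta j t)
          - (A i t * delta j k) * (A j t * delta i k)
          + (A i t * delta j k) * (A i t * delta j k)
          + (A i t * delta j k) * (A j k * delta i t)
          - (A j k * delta i t) * (A i k * delta j t)
          - (A j k * delta i t) * (A j t * delta i k)
          + (A j k * delta i t) * (A i t * delta j k)
          + (A j k * delta i t) * (A j k * delta i t) := fun i j k t => by
    simp only [kn]; ring
  simp_rw [h]
  simp only [Finset.sum_add_distrib, Finset.sum_sub_distrib]
  rw [q11, q12, q13, q14, q21, q22, q23, q24, q31, q32, q33, q34, q41, q42, q43, q44]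
  rw [inner2]
  ring

theorem TknA (T : Fin m → Fin m → Fin m → Fin m → ℝ) (hT : IsACT T) (A : Fin m → Fin m → ℝ) :
    inner4 T (kn A delta) = 4 * inner2 (ric T) A := by
  simp only [inner4, kn]
  have h : ∀ i j k t : Fin m,
      T i j k t * (A i k * delta j t + A j t * delta i k - A i t * delta j k - A j k * delta i t)
        = T i j k t * (A i k * delta j t) + T i j k t * (A j t * delta i k)
          - T i j k t * (A i t * delta j k) - T i j k t * (A j k * delta i t) :=
    fun i j k t => by ring
  simp_rw [h]
  simp only [Finset.sum_add_distrib, Finset.sum_sub_distrib]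
  rw [g1 T hT A, g2 T A, g3 T hT A, g4 T hT A, inner2]
  ring

theorem sum_sq_zero {n : ℕ} (g : Fin n → ℝ) (hg : ∀ x, 0 ≤ g x) (h : (∑ x, g x) = 0) (x : Fin n) :
    g x = 0 :=
  (Finset.sum_eq_zero_iff_of_nonneg fun y _ => hg y).1 h x (Finset.mem_univ x)

theorem inner4_self_nonneg (X : Fin m → Fin m → Fin m → Fin m → ℝ) : 0 ≤ inner4 X X :=
  Finset.sum_nonneg fun i _ => Finset.sum_nonneg fun j _ => Finset.sum_nonneg fun k _ =>
    Finset.sum_nonneg fun t _ => mul_self_nonneg _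

theorem inner2_self_nonneg (X : Fin m → Fin m → ℝ) : 0 ≤ inner2 X X :=
  Finset.sum_nonneg fun i _ => Finset.sum_nonneg fun j _ => mul_self_nonneg _

theorem inner4_eq_zero (X : Fin m → Fin m → Fin m → Fin m → ℝ) (h : inner4 X X = 0)
    (i j k t : Fin m) : X i j k t = 0 := by
  have h1 := sum_sq_zero _
    (fun a => Finset.sum_nonneg fun _ _ => Finset.sum_nonneg fun _ _ =>
      Finset.sum_nonneg fun _ _ => mul_self_nonneg _) h i
  have h2 := sum_sq_zero _
    (fun a => Finset.sum_nonneg fun _ _ => Finset.sum_nonneg fun _ _ => mul_self_nonneg _) h1 j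
  have h3 := sum_sq_zero _ (fun a => Finset.sum_nonneg fun _ _ => mul_self_nonneg _) h2 k
  have h4 := sum_sq_zero _ (fun a => mul_self_nonneg _) h3 t
  exact mul_self_eq_zero.1 h4

theorem inner2_eq_zero (X : Fin m → Fin m → ℝ) (h : inner2 X X = 0) (i j : Fin m) :
    X i j = 0 := by
  have h1 := sum_sq_zero _ (fun a => Finset.sum_nonneg fun _ _ => mul_self_nonneg _) h i
  have h2 := sum_sq_zero _ (fun a => mul_self_nonneg _) h1 j
  exact mul_self_eq_zero.1 h2

end Aux11e
set_option maxHeartbeats 2000000 in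
/-- `|P_T|² = |T|² − (2/(m−1))|E_T|² = |W_T|² + (2m/((m−2)(m−1)))|Z_T|²`;
in particular `P_T = 0` iff `T = (S_T/(2m(m−1)))·δ⊙δ`. -/
theorem statement11 (m : ℕ) (hm : 3 ≤ m)
    (T : Fin m → Fin m → Fin m → Fin m → ℝ) (hT : IsACT T) :
    inner4 (pproj T) (pproj T)
      = inner4 T T - 2 / ((m : ℝ) - 1) * inner2 (ric T) (ric T)
    ∧ inner4 (pproj T) (pproj T)
        = inner4 (Wpart T) (Wpart T)
          + 2 * (m : ℝ) / (((m : ℝ) - 2) * ((m : ℝ) - 1)) * inner2 (Zpart T) (Zpart T)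
    ∧ ((∀ i j k t, pproj T i j k t = 0) ↔
        (∀ i j k t, T i j k t
          = traceS T / (2 * (m : ℝ) * ((m : ℝ) - 1)) * kn delta delta i j k t)) := by
  have hmR : (3 : ℝ) ≤ (m : ℝ) := by exact_mod_cast hm
  have hm0 : (m : ℝ) ≠ 0 := ne_of_gt (by linarith)
  have hm1 : (m : ℝ) - 1 ≠ 0 := ne_of_gt (by linarith)
  have hm2 : (m : ℝ) - 2 ≠ 0 := ne_of_gt (by linarith)
  have hTU : inner4 T (fun i j k t => delta i k * ric T j t - delta i t * ric T j k)
      = 2 * inner2 (ric T) (ric T) := by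
    simp only [inner4]
    have h : ∀ i j k t : Fin m,
        T i j k t * (delta i k * ric T j t - delta i t * ric T j k)
          = T i j k t * (delta i k * ric T j t) - T i j k t * (delta i t * ric T j k) :=
      fun i j k t => by ring
    simp_rw [h]
    simp only [Finset.sum_sub_distrib]
    rw [e1 T (ric T), e2 T hT (ric T), inner2]
    ring
  have hUU : inner4 (fun i j k t => delta i k * ric T j t - delta i t * ric T j k)
        (fun i j k t => delta i k * ric T j t - delta i t * ric T j k)
      = 2 * ((m : ℝ) - 1) * inner2 (ric T) (ric T) := by
    simp only [inner4]
    have h : ∀ i j k t : Fin m,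
        (delta i k * ric T j t - delta i t * ric T j k)
            * (delta i k * ric T j t - delta i t * ric T j k)
          = (delta i k * ric T j t) * (delta i k * ric T j t)
            - (delta i k * ric T j t) * (delta i t * ric T j k)
            - (delta i t * ric T j k) * (delta i k * ric T j t)
            + (delta i t * ric T j k) * (delta i t * ric T j k) :=
      fun i j k t => by ring
    simp_rw [h]
    simp only [Finset.sum_add_distrib, Finset.sum_sub_distrib]
    rw [f11, f12, f21, f22, inner2]
    ring
  have hpart1 : inner4 (pproj T) (pproj T)
      = inner4 T T - 2 / ((m : ℝ) - 1) * inner2 (ric T) (ric T) := by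
    rw [show pproj T = (fun i j k t => T i j k t
        - 1 / ((m : ℝ) - 1) * (delta i k * ric T j t - delta i t * ric T j k)) from rfl]
    rw [inner4_expand, hTU, hUU]
    field_simp
    ring
  have hEd : inner2 (ric T) delta = traceS T := by
    simp [inner2, delta, traceS]
  have hdd : inner2 (delta : Fin m → Fin m → ℝ) delta = (m : ℝ) := by
    simp [inner2, delta]
  have hApart : Apart T = (fun i j => ric T i j
      - traceS T / (2 * ((m : ℝ) - 1)) * delta i j) := rfl
  have hAE : inner2 (ric T) (Apart T)
      = inner2 (ric T) (ric T) - traceS T / (2 * ((m : ℝ) - 1)) * traceS T := by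
    rw [hApart, inner2_sub_right, hEd]
  have hAA : inner2 (Apart T) (Apart T)
      = inner2 (ric T) (ric T) - 2 * (traceS T / (2 * ((m : ℝ) - 1))) * traceS T
        + (traceS T / (2 * ((m : ℝ) - 1))) ^ 2 * (m : ℝ) := by
    rw [hApart, inner2_expand, hEd, hdd]
  have htr : (∑ a, Apart T a a) = traceS T - traceS T / (2 * ((m : ℝ) - 1)) * (m : ℝ) := by
    simp only [Apart, Finset.sum_sub_distrib]
    rw [← traceS]
    simp [delta, Finset.sum_const, Finset.card_univ, mul_comm]
  have hZZ : inner2 (Zpart T) (Zpart T)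
      = inner2 (ric T) (ric T) - 2 * (traceS T / (m : ℝ)) * traceS T
        + (traceS T / (m : ℝ)) ^ 2 * (m : ℝ) := by
    rw [show Zpart T = (fun i j => ric T i j - traceS T / (m : ℝ) * delta i j) from rfl,
      inner2_expand, hEd, hdd]
  have hWW : inner4 (Wpart T) (Wpart T)
      = inner4 T T - 2 * (1 / ((m : ℝ) - 2)) * inner4 T (kn (Apart T) delta)
        + (1 / ((m : ℝ) - 2)) ^ 2
          * inner4 (kn (Apart T) delta) (kn (Apart T) delta) := by
    rw [show Wpart T = (fun i j k t => T i j k t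
        - 1 / ((m : ℝ) - 2) * kn (Apart T) delta i j k t) from rfl]
    exact inner4_expand T (kn (Apart T) delta) (1 / ((m : ℝ) - 2))
  have hpart2 : inner4 (pproj T) (pproj T)
      = inner4 (Wpart T) (Wpart T)
        + 2 * (m : ℝ) / (((m : ℝ) - 2) * ((m : ℝ) - 1)) * inner2 (Zpart T) (Zpart T) := by
    rw [hpart1, hWW, TknA T hT (Apart T), knAA (Apart T), hAE, hAA, htr, hZZ]
    field_simp
    ring
  refine ⟨hpart1, hpart2, ⟨fun hP => ?_, fun hEq => ?_⟩⟩
  · -- forward direction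
    have hz4 : inner4 (pproj T) (pproj T) = 0 := by
      simp [inner4, hP]
    have hWnn := inner4_self_nonneg (Wpart T)
    have hZnn := inner2_self_nonneg (Zpart T)
    have hcpos : 0 < 2 * (m : ℝ) / (((m : ℝ) - 2) * ((m : ℝ) - 1)) := by
      apply div_pos (by linarith)
      nlinarith
    have hW0 : inner4 (Wpart T) (Wpart T) = 0 := by
      nlinarith [mul_nonneg hcpos.le hZnn, hpart2]
    have hZ0 : inner2 (Zpart T) (Zpart T) = 0 := by
      have h5 : 2 * (m : ℝ) / (((m : ℝ) - 2) * ((m : ℝ) - 1)) * inner2 (Zpart T) (Zpart T)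
          = 0 := by linarith [hpart2, hz4, hW0]
      rcases mul_eq_zero.1 h5 with h | h
      · exact absurd h (ne_of_gt hcpos)
      · exact h
    have hricd : ∀ a b, ric T a b = traceS T / (m : ℝ) * delta a b := by
      intro a b
      have h6 := inner2_eq_zero _ hZ0 a b
      simp only [Zpart] at h6
      linarith
    intro i j k t
    have hw : T i j k t = 1 / ((m : ℝ) - 2) * kn (Apart T) delta i j k t := by
      have h7 := inner4_eq_zero _ hW0 i j k t
      simp only [Wpart] at h7
      linarith
    rw [hw]
    simp only [kn, Apart, hricd]
    field_simp
    ring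
  · -- backward direction
    have hs : ∀ a b : Fin m, ∑ x : Fin m, delta a x * delta x b = delta a b := by
      intro a b
      simp [delta]
    have hricc : ∀ a b, ric T a b = traceS T / (m : ℝ) * delta a b := by
      intro a b
      have hkn : ∀ x : Fin m, kn delta delta x a x b
          = 2 * delta a b - 2 * (delta a x * delta x b) := by
        intro x
        have hx : delta x x = (1 : ℝ) := by simp [delta]
        simp only [kn]
        rw [hx]
        ring
      have hsum : ∑ x : Fin m, (2 * delta a b - 2 * (delta a x * delta x b))
          = 2 * (m : ℝ) * delta a b - 2 * delta a b := by
        rw [Finset.sum_sub_distrib]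
        simp only [← Finset.mul_sum]
        rw [hs a b]
        simp [Finset.sum_const, Finset.card_univ]
        ring
      simp only [ric]
      simp_rw [hEq, hkn]
      rw [← Finset.mul_sum, hsum]
      field_simp
    intro i j k t
    simp only [pproj, hEq i j k t, kn, hricc]
    field_simp
    ring

end
end Paper
end

section
/- Let m ≥ 2 and let R be an algebraic curvature tensor on ℝ^m with curvature operator 𝔯 on Λ², whose eigenvalues (with multiplicity) are λ_1 ≤ … ≤ λ_N with N = m(m−1)/2. If Σ_{α=1}^k λ_α ≥ 0 for some integer 1 ≤ k < N, then k²·N·S² ≥ |R|², where S = Σ_{i,j} R_{ijij} is the scalar curvature and |R|² = Σ_{i,j,k,t} R_{ijkt}². -/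
open Finset

namespace Paper

noncomputable section

variable {m : ℕ}

def pairEquiv (m : ℕ) : {p : Fin m × Fin m // p.1 < p.2} ≃ (Σ j : Fin m, Fin j.val) where
  toFun p := ⟨p.1.2, ⟨p.1.1, p.2⟩⟩
  invFun q := ⟨(⟨q.2.1, lt_trans q.2.2 q.1.2⟩, q.1), q.2.2⟩
  left_inv p := by cases p; simp
  right_inv q := by rcases q with ⟨j, i⟩; simp

lemma card_pairs (m : ℕ) : Fintype.card {p : Fin m × Fin m // p.1 < p.2} = m * (m - 1) / 2 := by
  rw [Fintype.card_congr (pairEquiv m), Fintype.card_sigma]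
  simp only [Fintype.card_fin]
  rw [show (∑ x : Fin m, (x:ℕ)) = ∑ i ∈ Finset.range m, i from Fin.sum_univ_eq_sum_range (fun i => i) m, Finset.sum_range_id]

variable {m : ℕ}

lemma sum_pairs (A B : Fin m → Fin m → ℝ) (hA : ∀ i j, A i j = -A j i)
    (hB : ∀ i j, B i j = -B j i) :
    ∑ i, ∑ j, A i j * B i j
      = 2 * ∑ p : {p : Fin m × Fin m // p.1 < p.2}, A p.1.1 p.1.2 * B p.1.1 p.1.2 := by
  have hsub : ∑ p : {p : Fin m × Fin m // p.1 < p.2}, A p.1.1 p.1.2 * B p.1.1 p.1.2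
      = ∑ p ∈ (univ : Finset (Fin m × Fin m)).filter (fun p => p.1 < p.2),
          A p.1 p.2 * B p.1 p.2 := by
    exact (Finset.sum_subtype
      ((univ : Finset (Fin m × Fin m)).filter (fun p => p.1 < p.2))
      (fun x => by simp) (fun p : Fin m × Fin m => A p.1 p.2 * B p.1 p.2)).symm
  rw [hsub]
  rw [← Finset.sum_product' (s := univ) (t := univ), Finset.univ_product_univ]
  rw [← Finset.sum_filter_add_sum_filter_not univ (fun p : Fin m × Fin m => p.1 < p.2)]
  have hgt : ∑ p ∈ (univ : Finset (Fin m × Fin m)).filter (fun p => ¬ p.1 < p.2),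
      A p.1 p.2 * B p.1 p.2
      = ∑ p ∈ (univ : Finset (Fin m × Fin m)).filter (fun p => p.1 < p.2),
          A p.1 p.2 * B p.1 p.2 := by
    rw [← Finset.sum_filter_add_sum_filter_not _ (fun p : Fin m × Fin m => p.1 = p.2)]
    have h0 : ∑ p ∈ ((univ : Finset (Fin m × Fin m)).filter (fun p => ¬ p.1 < p.2)).filter
        (fun p => p.1 = p.2), A p.1 p.2 * B p.1 p.2 = 0 := by
      apply Finset.sum_eq_zero
      intro p hp
      simp only [Finset.mem_filter] at hp
      rcases hp with ⟨_, h⟩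
      have : A p.1 p.2 = 0 := by have := hA p.1 p.2; rw [h] at this ⊢; linarith
      rw [this, zero_mul]
    rw [h0, zero_add]
    apply Finset.sum_nbij' (i := fun p => Prod.swap p) (j := fun p => Prod.swap p)
    · intro p hp
      simp only [Finset.mem_filter, Finset.mem_univ, true_and] at hp ⊢
      rcases hp with ⟨h1, h2⟩
      exact lt_of_le_of_ne (not_lt.mp h1) (Ne.symm h2)
    · intro p hp
      simp only [Finset.mem_filter, Finset.mem_univ, true_and] at hp ⊢
      exact ⟨not_lt.mpr hp.le, (ne_of_lt hp).symm⟩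
    · intro p _; simp
    · intro p _; simp
    · intro p _
      simp only [Prod.fst_swap, Prod.snd_swap]
      rw [hA p.2 p.1, hB p.2 p.1]; ring
  rw [hgt]; ring

open Matrix in
noncomputable def Gdel (i j k t : Fin m) : ℝ :=
  ((if i = k then (1:ℝ) else 0) * (if j = t then (1:ℝ) else 0)
    - (if i = t then (1:ℝ) else 0) * (if j = k then (1:ℝ) else 0)) / 2

open Matrix

lemma complete_base (ω : Fin (m * (m - 1) / 2) → Fin m → Fin m → ℝ)
    (hanti : ∀ α i j, ω α i j = - ω α j i)
    (horth : ∀ α β, (∑ i, ∑ j, ω α i j * ω β i j) = if α = β then 1 else 0) :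
    ∀ i j k t : Fin m, i < j → k < t →
    ∑ α, ω α i j * ω α k t = if i = k ∧ j = t then 1/2 else 0 := by
  classical
  set P := {p : Fin m × Fin m // p.1 < p.2}
  let e : Fin (m * (m - 1) / 2) ≃ P := (Fintype.equivFinOfCardEq (card_pairs m)).symm
  set U : Matrix (Fin (m * (m - 1) / 2)) (Fin (m * (m - 1) / 2)) ℝ :=
    fun α β => Real.sqrt 2 * ω α (e β).1.1 (e β).1.2 with hU
  have hrow : U * Uᵀ = 1 := by
    ext α β
    rw [Matrix.mul_apply, Matrix.one_apply]
    simp only [Matrix.transpose_apply]; simp only [hU]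
    have : ∀ γ, (Real.sqrt 2 * ω α (e γ).1.1 (e γ).1.2) *
        (Real.sqrt 2 * ω β (e γ).1.1 (e γ).1.2)
        = 2 * (ω α (e γ).1.1 (e γ).1.2 * ω β (e γ).1.1 (e γ).1.2) := by
      intro γ
      have h2 : Real.sqrt 2 * Real.sqrt 2 = 2 := Real.mul_self_sqrt (by norm_num)
      rw [show ∀ a b : ℝ, (Real.sqrt 2 * a) * (Real.sqrt 2 * b)
        = (Real.sqrt 2 * Real.sqrt 2) * (a * b) from fun a b => by ring, h2]
    rw [Finset.sum_congr rfl (fun γ _ => this γ), ← Finset.mul_sum]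
    rw [Equiv.sum_comp e (fun p : P => ω α p.1.1 p.1.2 * ω β p.1.1 p.1.2)]
    rw [← sum_pairs (ω α) (ω β) (hanti α) (hanti β)] at *
    · rw [horth α β]
  have hcol : Uᵀ * U = 1 := mul_eq_one_comm.mp hrow
  have colP : ∀ p q : P, (∑ α, ω α p.1.1 p.1.2 * ω α q.1.1 q.1.2)
      = (if p = q then 1 else 0) / 2 := by
    intro p q
    have := congrFun (congrFun hcol (e.symm p)) (e.symm q)
    rw [Matrix.mul_apply, Matrix.one_apply] at this
    simp only [Matrix.transpose_apply] at this; simp only [hU, Equiv.apply_symm_apply] at this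
    have hsum : ∑ α, (Real.sqrt 2 * ω α p.1.1 p.1.2) * (Real.sqrt 2 * ω α q.1.1 q.1.2)
        = 2 * ∑ α, ω α p.1.1 p.1.2 * ω α q.1.1 q.1.2 := by
      rw [Finset.mul_sum]
      apply Finset.sum_congr rfl
      intro α _
      have h2 : Real.sqrt 2 * Real.sqrt 2 = 2 := Real.mul_self_sqrt (by norm_num)
      rw [show ∀ a b : ℝ, (Real.sqrt 2 * a) * (Real.sqrt 2 * b)
        = (Real.sqrt 2 * Real.sqrt 2) * (a * b) from fun a b => by ring, h2]
    rw [hsum] at this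
    have hpq : (e.symm p = e.symm q) ↔ (p = q) := e.symm.apply_eq_iff_eq
    by_cases h : p = q
    · simp [h] at this ⊢; linarith
    · rw [if_neg ((not_iff_not.mpr hpq).mpr h)] at this
      rw [if_neg h]; linarith
  intro i j k t hij hkt
  have hc := colP ⟨(i, j), hij⟩ ⟨(k, t), hkt⟩
  have hiff : ((⟨(i, j), hij⟩ : P) = ⟨(k, t), hkt⟩) ↔ (i = k ∧ j = t) := by
    simp [Subtype.ext_iff, Prod.ext_iff]
  rw [hc, if_congr hiff rfl rfl]
  split_ifs <;> norm_num


lemma complete_all (ω : Fin (m * (m - 1) / 2) → Fin m → Fin m → ℝ)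
    (hanti : ∀ α i j, ω α i j = - ω α j i)
    (horth : ∀ α β, (∑ i, ∑ j, ω α i j * ω β i j) = if α = β then 1 else 0)
    (i j k t : Fin m) :
    ∑ α, ω α i j * ω α k t = Gdel i j k t := by
  have hzero : ∀ (a : Fin (m * (m - 1) / 2)) (i : Fin m), ω a i i = 0 := by
    intro a i; have := hanti a i i; linarith
  have flipL : ∀ i j k t : Fin m,
      (∑ α, ω α i j * ω α k t) = -(∑ α, ω α j i * ω α k t) := by
    intro i j k t
    rw [← Finset.sum_neg_distrib]
    exact Finset.sum_congr rfl fun α _ => by rw [hanti α i j]; ring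
  have flipR : ∀ i j k t : Fin m,
      (∑ α, ω α i j * ω α k t) = -(∑ α, ω α i j * ω α t k) := by
    intro i j k t
    rw [← Finset.sum_neg_distrib]
    exact Finset.sum_congr rfl fun α _ => by rw [hanti α k t]; ring
  have base' : ∀ i j k t : Fin m, i < j → k < t →
      (∑ α, ω α i j * ω α k t) = Gdel i j k t := by
    intro i j k t hij hkt
    rw [complete_base ω hanti horth i j k t hij hkt]
    unfold Gdel
    rw [Fin.lt_def] at hij hkt
    split_ifs <;> try norm_num
    all_goals (exfalso; subst_vars; first | omega | simp_all)
  have lt_case : ∀ i j k t : Fin m, i < j →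
      (∑ α, ω α i j * ω α k t) = Gdel i j k t := by
    intro i j k t hij
    rcases lt_trichotomy k t with h | h | h
    · exact base' i j k t hij h
    · subst h
      rw [Finset.sum_eq_zero (fun α _ => by rw [hzero α k]; ring)]
      unfold Gdel; ring
    · rw [flipR i j k t, base' i j t k hij h]
      unfold Gdel; ring
  rcases lt_trichotomy i j with h | h | h
  · exact lt_case i j k t h
  · subst h
    rw [Finset.sum_eq_zero (fun α _ => by rw [hzero α i]; ring)]
    unfold Gdel; ring
  · rw [flipL i j k t, lt_case j i k t h]
    unfold Gdel; ring

section Trace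

variable (R : Fin m → Fin m → Fin m → Fin m → ℝ)
  (ω : Fin (m * (m - 1) / 2) → Fin m → Fin m → ℝ)

lemma key_swap
    (hanti : ∀ α i j, ω α i j = - ω α j i)
    (horth : ∀ α β, (∑ i, ∑ j, ω α i j * ω β i j) = if α = β then 1 else 0)
    (f : Fin m → Fin m → Fin m → Fin m → ℝ) :
    ∑ α, ∑ k, ∑ t, ∑ i, ∑ j, f i j k t * (ω α i j * ω α k t)
      = ∑ k, ∑ t, ∑ i, ∑ j, f i j k t * Gdel i j k t := by
  rw [Finset.sum_comm]; refine Finset.sum_congr rfl fun k _ => ?_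
  rw [Finset.sum_comm]; refine Finset.sum_congr rfl fun t _ => ?_
  rw [Finset.sum_comm]; refine Finset.sum_congr rfl fun i _ => ?_
  rw [Finset.sum_comm]; refine Finset.sum_congr rfl fun j _ => ?_
  rw [← Finset.mul_sum, complete_all ω hanti horth i j k t]

lemma sum_lam (lam : Fin (m * (m - 1) / 2) → ℝ)
    (hanti : ∀ α i j, ω α i j = - ω α j i)
    (horth : ∀ α β, (∑ i, ∑ j, ω α i j * ω β i j) = if α = β then 1 else 0)
    (heig : ∀ α k t, (∑ i, ∑ j, R i j k t * ω α i j) = lam α * ω α k t)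
    (hR1 : ∀ i j k t, R i j k t = - R j i k t) :
    ∑ α, lam α = ∑ i, ∑ j, R i j i j := by
  have step1 : ∀ α, lam α = ∑ k, ∑ t, ∑ i, ∑ j, R i j k t * (ω α i j * ω α k t) := by
    intro α
    have h1 : lam α = ∑ k, ∑ t, (lam α * ω α k t) * ω α k t := by
      have := horth α α
      rw [if_pos rfl] at this
      calc lam α = lam α * ∑ k, ∑ t, ω α k t * ω α k t := by rw [this, mul_one]
        _ = ∑ k, ∑ t, (lam α * ω α k t) * ω α k t := by
            rw [Finset.mul_sum]
            refine Finset.sum_congr rfl fun k _ => ?_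
            rw [Finset.mul_sum]
            exact Finset.sum_congr rfl fun t _ => by ring
    rw [h1]
    refine Finset.sum_congr rfl fun k _ => Finset.sum_congr rfl fun t _ => ?_
    rw [← heig α k t, Finset.sum_mul]
    refine Finset.sum_congr rfl fun i _ => ?_
    rw [Finset.sum_mul]
    exact Finset.sum_congr rfl fun j _ => by ring
  rw [Finset.sum_congr rfl fun α _ => step1 α, key_swap ω hanti horth R]
  have collapse : ∀ k t, ∑ i, ∑ j, R i j k t * Gdel i j k t = R k t k t := by
    intro k t
    have hexp : ∀ i j : Fin m, R i j k t * Gdel i j k t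
        = (R i j k t * ((if i = k then (1:ℝ) else 0) * (if j = t then (1:ℝ) else 0))
          - R i j k t * ((if i = t then (1:ℝ) else 0) * (if j = k then (1:ℝ) else 0))) / 2 := by
      intro i j; unfold Gdel; ring
    simp only [hexp]
    have e1 : ∑ i, ∑ j, R i j k t * ((if i = k then (1:ℝ) else 0) * (if j = t then (1:ℝ) else 0))
        = R k t k t := by
      simp [mul_ite, ite_mul, Finset.sum_ite_eq, Finset.sum_ite_eq']
    have e2 : ∑ i, ∑ j, R i j k t * ((if i = t then (1:ℝ) else 0) * (if j = k then (1:ℝ) else 0))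
        = R t k k t := by
      simp [mul_ite, ite_mul, Finset.sum_ite_eq, Finset.sum_ite_eq']
    simp only [sub_div, Finset.sum_sub_distrib, ← Finset.sum_div]
    rw [e1, e2, hR1 t k k t]
    ring
  rw [Finset.sum_congr rfl fun k _ => Finset.sum_congr rfl fun t _ => collapse k t]

lemma key_swap6
    (hanti : ∀ α i j, ω α i j = - ω α j i)
    (horth : ∀ α β, (∑ i, ∑ j, ω α i j * ω β i j) = if α = β then 1 else 0)
    (g : Fin m → Fin m → Fin m → Fin m → Fin m → Fin m → ℝ) :
    ∑ α, ∑ k, ∑ t, ∑ i, ∑ j, ∑ a, ∑ b, g k t i j a b * (ω α i j * ω α a b)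
      = ∑ k, ∑ t, ∑ i, ∑ j, ∑ a, ∑ b, g k t i j a b * Gdel i j a b := by
  rw [Finset.sum_comm]; refine Finset.sum_congr rfl fun k _ => ?_
  rw [Finset.sum_comm]; refine Finset.sum_congr rfl fun t _ => ?_
  rw [Finset.sum_comm]; refine Finset.sum_congr rfl fun i _ => ?_
  rw [Finset.sum_comm]; refine Finset.sum_congr rfl fun j _ => ?_
  rw [Finset.sum_comm]; refine Finset.sum_congr rfl fun a _ => ?_
  rw [Finset.sum_comm]; refine Finset.sum_congr rfl fun b _ => ?_
  rw [← Finset.mul_sum, complete_all ω hanti horth i j a b]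

lemma sum_lam_sq (lam : Fin (m * (m - 1) / 2) → ℝ)
    (hanti : ∀ α i j, ω α i j = - ω α j i)
    (horth : ∀ α β, (∑ i, ∑ j, ω α i j * ω β i j) = if α = β then 1 else 0)
    (heig : ∀ α k t, (∑ i, ∑ j, R i j k t * ω α i j) = lam α * ω α k t)
    (hR1 : ∀ i j k t, R i j k t = - R j i k t) :
    ∑ α, (lam α) ^ 2 = ∑ k, ∑ t, ∑ i, ∑ j, (R i j k t) ^ 2 := by
  have step1 : ∀ α, (lam α) ^ 2
      = ∑ k, ∑ t, ∑ i, ∑ j, ∑ a, ∑ b,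
          (R i j k t * R a b k t) * (ω α i j * ω α a b) := by
    intro α
    have h1 : (lam α) ^ 2 = ∑ k, ∑ t, (lam α * ω α k t) * (lam α * ω α k t) := by
      have := horth α α
      rw [if_pos rfl] at this
      calc (lam α) ^ 2 = lam α ^ 2 * ∑ k, ∑ t, ω α k t * ω α k t := by rw [this, mul_one]
        _ = ∑ k, ∑ t, (lam α * ω α k t) * (lam α * ω α k t) := by
            rw [Finset.mul_sum]
            refine Finset.sum_congr rfl fun k _ => ?_
            rw [Finset.mul_sum]
            exact Finset.sum_congr rfl fun t _ => by ring
    rw [h1]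
    refine Finset.sum_congr rfl fun k _ => Finset.sum_congr rfl fun t _ => ?_
    rw [← heig α k t, Finset.sum_mul]
    refine Finset.sum_congr rfl fun i _ => ?_
    rw [Finset.sum_mul]
    refine Finset.sum_congr rfl fun j _ => ?_
    rw [Finset.mul_sum]
    refine Finset.sum_congr rfl fun a _ => ?_
    rw [Finset.mul_sum]
    exact Finset.sum_congr rfl fun b _ => by ring
  rw [Finset.sum_congr rfl fun α _ => step1 α,
    key_swap6 ω hanti horth (fun k t i j a b => R i j k t * R a b k t)]
  refine Finset.sum_congr rfl fun k _ => Finset.sum_congr rfl fun t _ => ?_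
  refine Finset.sum_congr rfl fun i _ => Finset.sum_congr rfl fun j _ => ?_
  have hexp : ∀ a b : Fin m, (R i j k t * R a b k t) * Gdel i j a b
      = ((R i j k t * R a b k t) * ((if i = a then (1:ℝ) else 0) * (if j = b then (1:ℝ) else 0))
        - (R i j k t * R a b k t) * ((if i = b then (1:ℝ) else 0) * (if j = a then (1:ℝ) else 0))) / 2 := by
    intro a b; unfold Gdel; ring
  simp only [hexp]
  have e1 : ∑ a, ∑ b, (R i j k t * R a b k t) * ((if i = a then (1:ℝ) else 0) * (if j = b then (1:ℝ) else 0))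
      = R i j k t * R i j k t := by
    simp [mul_ite, ite_mul, Finset.sum_ite_eq, Finset.sum_ite_eq']
  have e2 : ∑ a, ∑ b, (R i j k t * R a b k t) * ((if i = b then (1:ℝ) else 0) * (if j = a then (1:ℝ) else 0))
      = R i j k t * R j i k t := by
    simp [mul_ite, ite_mul, Finset.sum_ite_eq, Finset.sum_ite_eq']
  simp only [sub_div, Finset.sum_sub_distrib, ← Finset.sum_div]
  rw [e1, e2, hR1 j i k t]
  ring

end Trace

lemma scalar_bound {N : ℕ} (lam : Fin N → ℝ) (hmono : Monotone lam)
    (k : ℕ) (hk1 : 1 ≤ k) (hk2 : k < N)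
    (hsum : 0 ≤ ∑ α ∈ Finset.univ.filter (fun α : Fin N => (α : ℕ) < k), lam α) :
    ∑ α, (lam α) ^ 2 ≤ (k : ℝ) ^ 2 * N * (∑ α, lam α) ^ 2 := by
  have hN : 0 < N := lt_of_le_of_lt (Nat.zero_le k) hk2
  set K := Finset.univ.filter (fun α : Fin N => (α : ℕ) < k) with hK
  have hmemK : ∀ α : Fin N, α ∈ K ↔ (α : ℕ) < k := by
    intro α; simp [hK]
  set κ : Fin N := ⟨k - 1, lt_trans (by omega) hk2⟩ with hκ
  set μ : Fin N := ⟨k, hk2⟩ with hμ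
  set zer : Fin N := ⟨0, hN⟩ with hzer
  have hzerK : zer ∈ K := (hmemK zer).mpr hk1
  have hcard_le : K.card ≤ k := by
    have := Finset.card_le_card_of_injOn (fun α : Fin N => (α : ℕ))
      (fun α hα => Finset.mem_range.mpr ((hmemK α).mp hα))
      (fun a _ b _ h => Fin.ext h)
    simpa using this
  have hleκ : ∀ β ∈ K, lam β ≤ lam κ := by
    intro β hβ
    refine hmono ?_
    have : (β : ℕ) < k := (hmemK β).mp hβ
    rw [Fin.le_def]; simp [hκ]; omega
  have hκ0 : 0 ≤ lam κ := by
    by_contra h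
    push_neg at h
    have hle := Finset.sum_le_card_nsmul K lam (lam κ) hleκ
    rw [nsmul_eq_mul] at hle
    have hcpos : 0 < (K.card : ℝ) := by
      have : 0 < K.card := Finset.card_pos.mpr ⟨zer, hzerK⟩
      exact_mod_cast this
    nlinarith
  have hκμ : lam κ ≤ lam μ := hmono (by rw [Fin.le_def]; exact Nat.sub_le k 1)
  have hnonnegC : ∀ β : Fin N, β ∉ K → 0 ≤ lam β := by
    intro β hβ
    have : ¬ (β : ℕ) < k := fun h => hβ ((hmemK β).mpr h)
    refine le_trans hκ0 (hmono ?_)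
    rw [Fin.le_def]; simp [hκ]; omega
  have hcompl : Kᶜ = Finset.univ.filter (fun α : Fin N => ¬ (α : ℕ) < k) := by
    rw [hK, Finset.compl_filter]
  have hsplit : (∑ α, lam α)
      = (∑ α ∈ K, lam α) + ∑ α ∈ Kᶜ, lam α := by
    rw [hcompl, hK, Finset.sum_filter_add_sum_filter_not]
  have hcompl_nonneg : 0 ≤ ∑ α ∈ Kᶜ, lam α :=
    Finset.sum_nonneg fun β hβ => hnonnegC β (Finset.mem_compl.mp hβ)
  have hS0 : 0 ≤ ∑ α, lam α := by rw [hsplit]; linarith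
  have hup : ∀ α : Fin N, lam α ≤ ∑ β, lam β := by
    have hup' : ∀ α : Fin N, α ∉ K → lam α ≤ ∑ β, lam β := by
      intro α hα
      have h1 : lam α ≤ ∑ β ∈ Kᶜ, lam β :=
        Finset.single_le_sum (fun β hβ => hnonnegC β (Finset.mem_compl.mp hβ))
          (Finset.mem_compl.mpr hα)
      rw [hsplit]; linarith
    intro α
    by_cases hα : α ∈ K
    · have hμK : μ ∉ K := by
        intro h
        have := (hmemK μ).mp h
        simp [hμ] at this
      have h1 : lam α ≤ lam κ := hleκ α hα
      have h2 := hup' μ hμK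
      linarith
    · exact hup' α hα
  have hlow : ∀ α : Fin N, -(((k : ℝ) - 1) * ∑ β, lam β) ≤ lam α := by
    have hzlow : -(((k : ℝ) - 1) * ∑ β, lam β) ≤ lam zer := by
      have hsumsplit : (∑ α ∈ K, lam α) = lam zer + ∑ α ∈ K.erase zer, lam α :=
        (Finset.add_sum_erase K lam hzerK).symm
      have herase : ∑ α ∈ K.erase zer, lam α ≤ (K.card - 1 : ℕ) • lam κ := by
        have := Finset.sum_le_card_nsmul (K.erase zer) lam (lam κ)
          (fun β hβ => hleκ β (Finset.mem_of_mem_erase hβ))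
        rwa [Finset.card_erase_of_mem hzerK] at this
      rw [nsmul_eq_mul] at herase
      have hcard1 : ((K.card - 1 : ℕ) : ℝ) ≤ (k : ℝ) - 1 := by
        have h1 : 1 ≤ K.card := Finset.card_pos.mpr ⟨zer, hzerK⟩
        have : ((K.card - 1 : ℕ) : ℝ) = (K.card : ℝ) - 1 := by
          push_cast [Nat.cast_sub h1]; ring
        rw [this]
        have : (K.card : ℝ) ≤ (k : ℝ) := by exact_mod_cast hcard_le
        linarith
      have hκS : lam κ ≤ ∑ β, lam β := hup κ
      nlinarith [hsum, hκ0]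
    intro α
    exact le_trans hzlow (hmono (by rw [Fin.le_def]; simp [hzer]))
  have hbound : ∀ α : Fin N, (lam α) ^ 2 ≤ ((k : ℝ) * ∑ β, lam β) ^ 2 := by
    intro α
    have hk1' : (1 : ℝ) ≤ (k : ℝ) := by exact_mod_cast hk1
    have h1 : lam α ≤ (k : ℝ) * ∑ β, lam β := by
      have := hup α
      nlinarith [hS0]
    have h2 : -((k : ℝ) * ∑ β, lam β) ≤ lam α := by
      have := hlow α
      nlinarith [hS0]
    exact sq_le_sq' h2 h1
  calc ∑ α, (lam α) ^ 2 ≤ ∑ _α : Fin N, ((k : ℝ) * ∑ β, lam β) ^ 2 :=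
        Finset.sum_le_sum fun α _ => hbound α
    _ = (N : ℝ) * ((k : ℝ) * ∑ β, lam β) ^ 2 := by
        rw [Finset.sum_const, Finset.card_univ, Fintype.card_fin, nsmul_eq_mul]
    _ = (k : ℝ) ^ 2 * N * (∑ α, lam α) ^ 2 := by ring

/-- If the sum of the `k` smallest eigenvalues of the curvature operator is
non-negative for some `1 ≤ k < N = m(m−1)/2`, then `k²·N·S² ≥ |R|²`. -/
theorem statement13 (m : ℕ) (hm : 2 ≤ m)
    (R : Fin m → Fin m → Fin m → Fin m → ℝ) (hR : IsACT R)
    (lam : Fin (m * (m - 1) / 2) → ℝ) (ω : Fin (m * (m - 1) / 2) → Fin m → Fin m → ℝ)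
    (hspec : SpectralData R lam ω)
    (k : ℕ) (hk1 : 1 ≤ k) (hk2 : k < m * (m - 1) / 2)
    (hsum : 0 ≤ ∑ α ∈ Finset.univ.filter
        (fun α : Fin (m * (m - 1) / 2) => (α : ℕ) < k), lam α) :
    inner4 R R
      ≤ (k : ℝ) ^ 2 * ((m * (m - 1) / 2 : ℕ) : ℝ) * (∑ i, ∑ j, R i j i j) ^ 2 := by
  obtain ⟨hanti, horth0, heig, hmono⟩ := hspec
  have horth : ∀ α β, (∑ i, ∑ j, ω α i j * ω β i j) = if α = β then 1 else 0 :=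
    fun α β => horth0 α β
  have hR1 : ∀ i j k t, R i j k t = - R j i k t := hR.1
  have swap4 : ∀ (f : Fin m → Fin m → Fin m → Fin m → ℝ),
      ∑ i, ∑ j, ∑ k, ∑ t, f i j k t = ∑ k, ∑ t, ∑ i, ∑ j, f i j k t := by
    intro f
    calc ∑ i, ∑ j, ∑ k, ∑ t, f i j k t
        = ∑ i, ∑ k, ∑ j, ∑ t, f i j k t :=
          Finset.sum_congr rfl fun i _ => Finset.sum_comm
      _ = ∑ k, ∑ i, ∑ j, ∑ t, f i j k t := Finset.sum_comm
      _ = ∑ k, ∑ i, ∑ t, ∑ j, f i j k t :=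
          Finset.sum_congr rfl fun k _ => Finset.sum_congr rfl fun i _ => Finset.sum_comm
      _ = ∑ k, ∑ t, ∑ i, ∑ j, f i j k t :=
          Finset.sum_congr rfl fun k _ => Finset.sum_comm
  have h1 : inner4 R R = ∑ α, (lam α) ^ 2 := by
    rw [sum_lam_sq R ω lam hanti horth heig hR1]
    unfold inner4
    rw [swap4 (fun i j k t => R i j k t * R i j k t)]
    exact Finset.sum_congr rfl fun k _ => Finset.sum_congr rfl fun t _ =>
      Finset.sum_congr rfl fun i _ => Finset.sum_congr rfl fun j _ => (sq (R i j k t)) ▸ by ring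
  have h2 : ∑ α, lam α = ∑ i, ∑ j, R i j i j :=
    sum_lam R ω lam hanti horth heig hR1
  have h3 := scalar_bound lam hmono k hk1 hk2 hsum
  rw [h1, ← h2]
  exact h3

end

end Paper
end
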